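/- arXiv:2605.23556 — 11 statements merged into one kernel-verified Lean document; each statement's English description precedes it below -/
import Mathlib

section
/- Let A ∈ {0,1}^{N×n}, and suppose there exist unit vectors U_1,...,U_N and V_1,...,V_n in R^d such that ⟨U_j, V_i⟩ ≥ τ + m when A_{ji} = 1 and ⟨U_j, V_i⟩ ≤ τ − m when A_{ji} = 0, where m > 0 and τ ∈ [−1, 1]. Then there exist unit vectors Ũ_1,...,Ũ_N and Ṽ_1,...,Ṽ_n in R^{d+1} such that ⟨Ũ_j, Ṽ_i⟩ ≥ m/(1+|τ|) when A_{ji} = 1 and ⟨Ũ_j, Ṽ_i⟩ ≤ −m/(1+|τ|) when A_{ji} = 0. -/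
open RealInnerProductSpace

theorem stmt2 {N n d : ℕ} (A : Fin N → Fin n → Bool)
    (U : Fin N → EuclideanSpace ℝ (Fin d)) (V : Fin n → EuclideanSpace ℝ (Fin d))
    (hU : ∀ j, ‖U j‖ = 1) (hV : ∀ i, ‖V i‖ = 1)
    (m τ : ℝ) (hm : 0 < m) (hτ₁ : -1 ≤ τ) (hτ₂ : τ ≤ 1)
    (hpos : ∀ j i, A j i = true → τ + m ≤ ⟪U j, V i⟫)
    (hneg : ∀ j i, A j i = false → ⟪U j, V i⟫ ≤ τ - m) :
    ∃ (U' : Fin N → EuclideanSpace ℝ (Fin (d + 1)))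
      (V' : Fin n → EuclideanSpace ℝ (Fin (d + 1))),
      (∀ j, ‖U' j‖ = 1) ∧ (∀ i, ‖V' i‖ = 1) ∧
      (∀ j i, A j i = true → m / (1 + |τ|) ≤ ⟪U' j, V' i⟫) ∧
      (∀ j i, A j i = false → ⟪U' j, V' i⟫ ≤ -(m / (1 + |τ|))) := by
  set s : ℝ := Real.sqrt (1 + |τ|) with hs_def
  have h1τ : (0:ℝ) < 1 + |τ| := by positivity
  have hs_pos : 0 < s := Real.sqrt_pos.mpr h1τ
  have hs_sq : s * s = 1 + |τ| := Real.mul_self_sqrt h1τ.le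
  set t : ℝ := Real.sqrt |τ| with ht_def
  have ht_sq : t * t = |τ| := Real.mul_self_sqrt (abs_nonneg τ)
  have hsign : Real.sign τ * t * (Real.sign τ * t) = |τ| := by
    rcases lt_trichotomy τ 0 with h | h | h
    · rw [Real.sign_of_neg h]; nlinarith [ht_sq]
    · simp [h]
    · rw [Real.sign_of_pos h]; nlinarith [ht_sq]
  have hsignτ : Real.sign τ * t * t = τ := by
    rw [mul_assoc, ht_sq]
    rcases lt_trichotomy τ 0 with h | h | h
    · rw [Real.sign_of_neg h, abs_of_neg h]; ring
    · simp [h]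
    · rw [Real.sign_of_pos h, abs_of_pos h]; ring
  clear hs_def ht_def
  clear_value s t
  set U' : Fin N → EuclideanSpace ℝ (Fin (d + 1)) :=
    fun j => WithLp.toLp 2 (Fin.snoc (α := fun _ => ℝ) (fun k => U j k / s) (-(Real.sign τ) * t / s)) with hU'_def
  set V' : Fin n → EuclideanSpace ℝ (Fin (d + 1)) :=
    fun i => WithLp.toLp 2 (Fin.snoc (α := fun _ => ℝ) (fun k => V i k / s) (t / s)) with hV'_def
  refine ⟨U', V', ?_, ?_, ?_, ?_⟩
  all_goals
    try (intro j)
  · -- norm U'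
    have hUj : ∑ k, U j k * U j k = 1 := by
      have := real_inner_self_eq_norm_sq (U j)
      rw [hU j] at this
      simpa only [PiLp.inner_apply, RCLike.inner_apply, conj_trivial, one_pow] using this
    rw [EuclideanSpace.norm_eq]
    rw [Fin.sum_univ_castSucc]
    simp only [hU'_def, PiLp.toLp_apply, Fin.snoc_castSucc, Fin.snoc_last, Real.norm_eq_abs, sq_abs]
    have : ∑ k : Fin d, (U j k / s) ^ 2 + (-(Real.sign τ) * t / s) ^ 2 = 1 := by
      field_simp
      rw [← Finset.sum_div]
      have : ∑ k : Fin d, U j k ^ 2 = 1 := by simpa [sq] using hUj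
      rw [this]
      field_simp
      nlinarith [hsign, hs_sq]
    rw [this, Real.sqrt_one]
  · -- norm V'
    have hVj : ∑ k, V j k * V j k = 1 := by
      have := real_inner_self_eq_norm_sq (V j)
      rw [hV j] at this
      simpa only [PiLp.inner_apply, RCLike.inner_apply, conj_trivial, one_pow] using this
    rw [EuclideanSpace.norm_eq]
    rw [Fin.sum_univ_castSucc]
    simp only [hV'_def, PiLp.toLp_apply, Fin.snoc_castSucc, Fin.snoc_last, Real.norm_eq_abs, sq_abs]
    have : ∑ k : Fin d, (V j k / s) ^ 2 + (t / s) ^ 2 = 1 := by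
      field_simp
      rw [← Finset.sum_div]
      have : ∑ k : Fin d, V j k ^ 2 = 1 := by simpa [sq] using hVj
      rw [this]
      field_simp
      nlinarith [ht_sq, hs_sq]
    rw [this, Real.sqrt_one]
  all_goals
    intro i hA
    have hinner : ⟪U' j, V' i⟫ = (⟪U j, V i⟫ - τ) / (1 + |τ|) := by
      simp only [hU'_def, hV'_def]
      simp only [PiLp.inner_apply, RCLike.inner_apply, conj_trivial]
      rw [Fin.sum_univ_castSucc]
      simp only [PiLp.toLp_apply, Fin.snoc_castSucc, Fin.snoc_last]
      simp only [mul_comm ((V i).ofLp _ / s), mul_comm (t / s), mul_comm ((V i).ofLp _)]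
      have hsum : ∑ k : Fin d, U j k / s * (V i k / s)
          = (∑ k : Fin d, U j k * V i k) / (1 + |τ|) := by
        rw [← hs_sq]
        simp only [div_mul_div_comm]
        rw [← Finset.sum_div]
      rw [hsum]
      have h2 : -(Real.sign τ) * t / s * (t / s) = -τ / (1 + |τ|) := by
        rw [← hs_sq]
        field_simp
        nlinarith [hsignτ]
      rw [h2]
      ring
    rw [hinner]
  · have := hpos j i hA
    gcongr
    linarith
  · have := hneg j i hA
    rw [← neg_div]
    gcongr
    linarith
end

section
/- Let A ∈ {0,1}^{N×n} and suppose unit vectors {U_j}_{j=1}^N, {V_i}_{i=1}^n in R^d form a margin-m relative-bias-0 embedding of A with m > 0. Let J ∈ R^{N×n} satisfy: J_{ji} ≥ 0 whenever A_{ji} = 1, J_{ji} ≤ 0 whenever A_{ji} = 0, and Σ_{j,i}|J_{ji}| = 1. Then m ≤ ‖J‖_op · √(N n), where ‖J‖_op is the operator (spectral) norm of J. -/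
open RealInnerProductSpace

theorem stmt3 {N n d : ℕ} (A : Fin N → Fin n → Bool)
    (U : Fin N → EuclideanSpace ℝ (Fin d)) (V : Fin n → EuclideanSpace ℝ (Fin d))
    (hU : ∀ j, ‖U j‖ = 1) (hV : ∀ i, ‖V i‖ = 1)
    (m : ℝ) (hm : 0 < m)
    (hpos : ∀ j i, A j i = true → m ≤ ⟪U j, V i⟫)
    (hneg : ∀ j i, A j i = false → ⟪U j, V i⟫ ≤ -m)
    (J : Matrix (Fin N) (Fin n) ℝ)
    (hJpos : ∀ j i, A j i = true → 0 ≤ J j i)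
    (hJneg : ∀ j i, A j i = false → J j i ≤ 0)
    (hJsum : ∑ j, ∑ i, |J j i| = 1) :
    m ≤ ‖(Matrix.toEuclideanLin J).toContinuousLinearMap‖ * Real.sqrt (N * n) := by
  set T := (Matrix.toEuclideanLin J).toContinuousLinearMap with hT
  -- coordinate slices
  set x : Fin d → EuclideanSpace ℝ (Fin N) := fun k => (WithLp.equiv 2 _).symm (fun j => U j k) with hx
  set y : Fin d → EuclideanSpace ℝ (Fin n) := fun k => (WithLp.equiv 2 _).symm (fun i => V i k) with hy
  have key : ∀ j i, m * |J j i| ≤ J j i * ⟪U j, V i⟫ := by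
    intro j i
    cases h : A j i with
    | true =>
      have h1 := hJpos j i h
      rw [abs_of_nonneg h1, mul_comm]
      exact mul_le_mul_of_nonneg_left (hpos j i h) h1
    | false =>
      have h1 := hJneg j i h
      rw [abs_of_nonpos h1]
      have := mul_le_mul_of_nonpos_left (hneg j i h) h1
      linarith [this]
  have step1 : m ≤ ∑ j, ∑ i, J j i * ⟪U j, V i⟫ := by
    calc m = m * ∑ j, ∑ i, |J j i| := by rw [hJsum, mul_one]
      _ = ∑ j, ∑ i, m * |J j i| := by simp_rw [Finset.mul_sum]
      _ ≤ _ := by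
            apply Finset.sum_le_sum; intro j _; apply Finset.sum_le_sum; intro i _
            exact key j i
  have inner_eq : ∀ (j : Fin N) (i : Fin n), ⟪U j, V i⟫ = ∑ k, U j k * V i k := by
    intro j i
    simp [PiLp.inner_apply, RCLike.inner_apply]
    exact Finset.sum_congr rfl fun _ _ => mul_comm _ _
  have step2 : ∑ j, ∑ i, J j i * ⟪U j, V i⟫ = ∑ k, ⟪x k, T (y k)⟫ := by
    have : ∀ k, ⟪x k, T (y k)⟫ = ∑ j, ∑ i, U j k * (J j i * V i k) := by
      intro k
      simp only [hT, LinearMap.coe_toContinuousLinearMap', Matrix.toEuclideanLin_apply]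
      simp [PiLp.inner_apply, RCLike.inner_apply, Matrix.mulVec, dotProduct,
        Finset.mul_sum, hx, hy]
      refine Finset.sum_congr rfl fun j _ => ?_
      rw [Finset.sum_mul]
      exact Finset.sum_congr rfl fun i _ => by ring
    simp_rw [this]
    rw [Finset.sum_comm (s := (Finset.univ : Finset (Fin d))) (t := (Finset.univ : Finset (Fin N)))]
    refine Finset.sum_congr rfl fun j _ => ?_
    simp_rw [inner_eq, Finset.mul_sum]
    rw [Finset.sum_comm]
    exact Finset.sum_congr rfl fun k _ => Finset.sum_congr rfl fun i _ => by ring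
  have step3 : ∑ k, ⟪x k, T (y k)⟫ ≤ ‖T‖ * ∑ k, ‖x k‖ * ‖y k‖ := by
    rw [Finset.mul_sum]
    apply Finset.sum_le_sum
    intro k _
    calc ⟪x k, T (y k)⟫ ≤ ‖x k‖ * ‖T (y k)‖ := real_inner_le_norm _ _
      _ ≤ ‖x k‖ * (‖T‖ * ‖y k‖) := by
          exact mul_le_mul_of_nonneg_left (T.le_opNorm _) (norm_nonneg _)
      _ = ‖T‖ * (‖x k‖ * ‖y k‖) := by ring
  have normsq : ∀ (k : Fin d), ‖x k‖ ^ 2 = ∑ j, (U j k) ^ 2 := by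
    intro k
    rw [← real_inner_self_eq_norm_sq]
    rw [hx, PiLp.inner_apply]
    simp [RCLike.inner_apply, sq]
  have normsqy : ∀ (k : Fin d), ‖y k‖ ^ 2 = ∑ i, (V i k) ^ 2 := by
    intro k
    rw [← real_inner_self_eq_norm_sq]
    rw [hy, PiLp.inner_apply]
    simp [RCLike.inner_apply, sq]
  have sumx : ∑ k, ‖x k‖ ^ 2 = (N : ℝ) := by
    simp_rw [normsq]
    rw [Finset.sum_comm]
    have : ∀ j : Fin N, ∑ k, (U j k) ^ 2 = 1 := by
      intro j
      have h2 : ⟪U j, U j⟫ = ∑ k, (U j k) ^ 2 := by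
        rw [PiLp.inner_apply]
        simp [RCLike.inner_apply, sq]
      rw [← h2, real_inner_self_eq_norm_sq, hU j]; norm_num
    simp [this]
  have sumy : ∑ k, ‖y k‖ ^ 2 = (n : ℝ) := by
    simp_rw [normsqy]
    rw [Finset.sum_comm]
    have : ∀ i : Fin n, ∑ k, (V i k) ^ 2 = 1 := by
      intro i
      have h2 : ⟪V i, V i⟫ = ∑ k, (V i k) ^ 2 := by
        rw [PiLp.inner_apply]
        simp [RCLike.inner_apply, sq]
      have := hV i
      rw [← h2, real_inner_self_eq_norm_sq, this]; norm_num
    simp [this]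
  have step4 : ∑ k, ‖x k‖ * ‖y k‖ ≤ Real.sqrt (N * n) := by
    calc ∑ k, ‖x k‖ * ‖y k‖ ≤ Real.sqrt (∑ k, ‖x k‖ ^ 2) * Real.sqrt (∑ k, ‖y k‖ ^ 2) :=
          Real.sum_mul_le_sqrt_mul_sqrt _ _ _
      _ = Real.sqrt (N * n) := by rw [sumx, sumy, ← Real.sqrt_mul (by positivity)]
  calc m ≤ ∑ j, ∑ i, J j i * ⟪U j, V i⟫ := step1
    _ = ∑ k, ⟪x k, T (y k)⟫ := step2
    _ ≤ ‖T‖ * ∑ k, ‖x k‖ * ‖y k‖ := step3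
    _ ≤ ‖T‖ * Real.sqrt (N * n) := mul_le_mul_of_nonneg_left step4 (norm_nonneg _)
end

section
/- Let n ≥ 3k and suppose there exists a margin-m relative-bias-0 embedding {U_j}, {V_i} of S_{n,k} in some dimension, with m > 0. Then m·√k ≤ 1. -/
open RealInnerProductSpace

lemma sign_orth {α : Type*} [DecidableEq α] (T : Finset α) {i j : α} (hj : j ∈ T)
    (hij : i ≠ j) :
    ∑ A ∈ T.powerset, ((if i ∈ A then (1:ℝ) else -1) * (if j ∈ A then (1:ℝ) else -1)) = 0 := by
  refine Finset.sum_involution (fun A _ => if j ∈ A then A.erase j else insert j A)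
    (fun A hA => ?_) (fun A hA _ => ?_) (fun A hA => ?_) (fun A hA => ?_)
  · by_cases h : j ∈ A
    · rw [if_pos h]
      have hjE : j ∉ A.erase j := Finset.notMem_erase j A
      have hiE : i ∈ A.erase j ↔ i ∈ A := by simp [Finset.mem_erase, hij]
      by_cases hi : i ∈ A <;> simp [h, hjE, hiE, hi]
    · rw [if_neg h]
      have hjI : j ∈ insert j A := Finset.mem_insert_self j A
      have hiI : i ∈ insert j A ↔ i ∈ A := by simp [Finset.mem_insert, hij]
      by_cases hi : i ∈ A <;> simp [h, hjI, hiI, hi]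
  · by_cases h : j ∈ A
    · rw [if_pos h]; intro hEq
      rw [← hEq] at h; exact Finset.notMem_erase j A h
    · rw [if_neg h]; intro hEq
      have := Finset.mem_insert_self j A
      rw [hEq] at this; exact h this
  · by_cases h : j ∈ A <;> simp [h, Finset.mem_powerset] at hA ⊢
    · exact (Finset.erase_subset _ _).trans hA
    · exact Finset.insert_subset hj hA
  · by_cases h : j ∈ A
    · rw [if_pos h, if_neg (Finset.notMem_erase j A), Finset.insert_erase h]
    · rw [if_neg h, if_pos (Finset.mem_insert_self j A), Finset.erase_insert h]

theorem stmt5 {n k d : ℕ} (hnk : 3 * k ≤ n) (m : ℝ) (hm : 0 < m)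
    (U : {S : Finset (Fin n) // S.card = k} → EuclideanSpace ℝ (Fin d))
    (V : Fin n → EuclideanSpace ℝ (Fin d))
    (hU : ∀ S, ‖U S‖ = 1) (hV : ∀ i, ‖V i‖ = 1)
    (hpos : ∀ S i, i ∈ S.1 → m ≤ ⟪U S, V i⟫)
    (hneg : ∀ S i, i ∉ S.1 → ⟪U S, V i⟫ ≤ -m) :
    m * Real.sqrt k ≤ 1 := by
  rcases Nat.eq_zero_or_pos k with hk0 | hk0
  · subst hk0; simp
  have hkn : k ≤ n := by omega
  obtain ⟨T, -, hT⟩ := Finset.exists_subset_card_eq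
    (s := (Finset.univ : Finset (Fin n))) (n := k) (by simpa using hkn)
  set e : Fin n → Finset (Fin n) → ℝ := fun i A => if i ∈ A then 1 else -1 with he
  set w : Finset (Fin n) → EuclideanSpace ℝ (Fin d) :=
    fun A => ∑ i ∈ T, e i A • V i with hw
  -- The expansion of ‖w A‖²
  have expand : ∀ A, ‖w A‖^2 = ∑ i ∈ T, ∑ j ∈ T, (e i A * e j A) * ⟪V i, V j⟫ := by
    intro A
    rw [← real_inner_self_eq_norm_sq, hw]
    rw [sum_inner]
    refine Finset.sum_congr rfl fun i hi => ?_
    rw [inner_sum]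
    refine Finset.sum_congr rfl fun j hj => ?_
    rw [real_inner_smul_left, real_inner_smul_right]; ring
  -- Average: sum over powerset equals 2^k * k
  have hsum : ∑ A ∈ T.powerset, ‖w A‖^2 = 2^k * k := by
    calc ∑ A ∈ T.powerset, ‖w A‖^2
        = ∑ A ∈ T.powerset, ∑ i ∈ T, ∑ j ∈ T, (e i A * e j A) * ⟪V i, V j⟫ :=
          Finset.sum_congr rfl (fun A _ => expand A)
      _ = ∑ i ∈ T, ∑ j ∈ T, ∑ A ∈ T.powerset, (e i A * e j A) * ⟪V i, V j⟫ := by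
          rw [Finset.sum_comm]
          exact Finset.sum_congr rfl fun i _ => Finset.sum_comm
      _ = ∑ i ∈ T, ∑ j ∈ T, (∑ A ∈ T.powerset, e i A * e j A) * ⟪V i, V j⟫ := by
          simp [Finset.sum_mul]
      _ = ∑ i ∈ T, ∑ j ∈ T, (if i = j then (2:ℝ)^k else 0) := by
          refine Finset.sum_congr rfl fun i hi => Finset.sum_congr rfl fun j hj => ?_
          by_cases hij : i = j
          · subst hij
            have : ∑ A ∈ T.powerset, e i A * e i A = (2:ℝ)^k := by
              have : ∀ A ∈ T.powerset, e i A * e i A = 1 := by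
                intro A _
                by_cases h : i ∈ A <;> simp [he, h]
              rw [Finset.sum_congr rfl this]
              simp [Finset.card_powerset, hT]
            rw [this, if_pos rfl, real_inner_self_eq_norm_sq, hV i, one_pow, mul_one]
          · rw [sign_orth T hj hij]
            simp [hij]
      _ = 2^k * k := by
          rw [Finset.sum_congr rfl fun i hi => Finset.sum_ite_eq T i (fun _ => (2:ℝ)^k)]
          simp only [Finset.sum_ite_mem, Finset.inter_self]
          simp [hT, mul_comm]
  -- Lower bound per A
  have hlow : ∀ A ∈ T.powerset, (m * k)^2 ≤ ‖w A‖^2 := by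
    intro A hA
    have hAT : A ⊆ T := Finset.mem_powerset.mp hA
    have hAcard : A.card ≤ k := hT ▸ Finset.card_le_card hAT
    have hcompl : k - A.card ≤ Tᶜ.card := by
      rw [Finset.card_compl, hT]
      simp only [Fintype.card_fin]
      omega
    obtain ⟨B, hBsub, hBcard⟩ := Finset.exists_subset_card_eq hcompl
    have hdisj : Disjoint A B := by
      refine Finset.disjoint_left.mpr fun x hxA hxB => ?_
      have := hBsub hxB
      simp [Finset.mem_compl] at this
      exact this (hAT hxA)
    have hScard : (A ∪ B).card = k := by
      rw [Finset.card_union_of_disjoint hdisj, hBcard]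
      omega
    set S : {S : Finset (Fin n) // S.card = k} := ⟨A ∪ B, hScard⟩ with hS
    have key : ∀ i ∈ T, m ≤ e i A * ⟪U S, V i⟫ := by
      intro i hi
      by_cases h : i ∈ A
      · have : i ∈ S.1 := Finset.mem_union_left _ h
        have := hpos S i this
        simpa [he, h] using this
      · have hiB : i ∉ B := fun hiB => by
          have := hBsub hiB
          simp [Finset.mem_compl] at this
          exact this hi
        have : i ∉ S.1 := by
          simp [hS, Finset.mem_union, h, hiB]
        have := hneg S i this
        simp only [he, h, if_neg, if_false]
        linarith
    have hinner : ⟪U S, w A⟫ = ∑ i ∈ T, e i A * ⟪U S, V i⟫ := by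
      rw [hw, inner_sum]
      exact Finset.sum_congr rfl fun i _ => real_inner_smul_right _ _ _
    have h1 : m * k ≤ ⟪U S, w A⟫ := by
      rw [hinner]
      calc m * k = ∑ _i ∈ T, m := by rw [Finset.sum_const, hT]; ring
        _ ≤ ∑ i ∈ T, e i A * ⟪U S, V i⟫ := Finset.sum_le_sum key
    have h2 : ⟪U S, w A⟫ ≤ ‖w A‖ := by
      have := real_inner_le_norm (U S) (w A)
      rwa [hU S, one_mul] at this
    have hmk : 0 ≤ m * k := by positivity
    have : m * k ≤ ‖w A‖ := le_trans h1 h2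
    nlinarith [norm_nonneg (w A)]
  -- Combine
  have hcard : (T.powerset.card : ℝ) = 2^k := by
    rw [Finset.card_powerset, hT]; push_cast; ring
  have hbound : (2:ℝ)^k * (m * k)^2 ≤ 2^k * k := by
    calc (2:ℝ)^k * (m * k)^2 = ∑ _A ∈ T.powerset, (m * k)^2 := by
          rw [Finset.sum_const, nsmul_eq_mul, hcard]
      _ ≤ ∑ A ∈ T.powerset, ‖w A‖^2 := Finset.sum_le_sum hlow
      _ = 2^k * k := hsum
  have hpow : (0:ℝ) < 2^k := by positivity
  have hk' : (0:ℝ) < k := by exact_mod_cast hk0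
  have hsq : m^2 * k ≤ 1 := by
    have h1 : (m * k)^2 ≤ k := le_of_mul_le_mul_left (by linarith [hbound]) hpow
    have := mul_le_mul_of_nonneg_right h1 (le_of_lt (inv_pos.mpr hk'))
    nlinarith
  have hsqrt : Real.sqrt k ^ 2 = k := Real.sq_sqrt (Nat.cast_nonneg k)
  nlinarith [sq_nonneg (m * Real.sqrt k - 1), mul_nonneg hm.le (Real.sqrt_nonneg (k:ℝ)), hsqrt]
end

section
/- Let {U_j}, {V_i} be a margin-m relative-bias-0 embedding of S_{n,k} in dimension d, with n ≥ 3k, and let V : R^n → R^d be the linear map sending e_i to V_i. Then for every x ∈ R^n with at most k nonzero coordinates, ‖V x‖₂ ≥ m‖x‖₁. -/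
/-!
Choose a row `S` of `S_{n,k}` containing every index where `x` is positive and none where it is
negative; this is possible because `x` has at most `k` nonzero entries and `n ≥ 2k`. The margin
conditions then give `x i * ⟪U S, V i⟫ ≥ m * |x i|` for every `i`, so, `U S` being a unit vector,
`m * ‖x‖₁ ≤ ⟪U S, V x⟫ ≤ ‖V x‖`.
-/

open RealInnerProductSpace

lemma mul_abs_le_mul_of_sign_pattern {a c m : ℝ} (hpos : 0 < a → m ≤ c) (hneg : a < 0 → c ≤ -m) :
    m * |a| ≤ a * c := by
  rcases lt_trichotomy a 0 with ha | rfl | ha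
  · rw [abs_of_neg ha]
    nlinarith [hneg ha]
  · simp
  · rw [abs_of_pos ha]
    nlinarith [hpos ha]

lemma mul_sum_abs_le_norm_sum_smul {ι E : Type*} [Fintype ι] [NormedAddCommGroup E]
    [InnerProductSpace ℝ E] {m : ℝ} {u : E} (hu : ‖u‖ = 1) (V : ι → E) (x : ι → ℝ)
    (h : ∀ i, m * |x i| ≤ x i * ⟪u, V i⟫) :
    m * ∑ i, |x i| ≤ ‖∑ i, x i • V i‖ :=
  calc m * ∑ i, |x i| = ∑ i, m * |x i| := Finset.mul_sum _ _ _
    _ ≤ ∑ i, x i * ⟪u, V i⟫ := Finset.sum_le_sum fun i _ => h i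
    _ = ⟪u, ∑ i, x i • V i⟫ := by simp only [inner_sum, real_inner_smul_right]
    _ ≤ ‖u‖ * ‖∑ i, x i • V i‖ := real_inner_le_norm _ _
    _ = ‖∑ i, x i • V i‖ := by rw [hu, one_mul]

lemma exists_card_eq_pos_subset_disjoint_neg {ι : Type*} [Fintype ι] {k : ℕ}
    (hk : 2 * k ≤ Fintype.card ι) (x : ι → ℝ)
    (hx : (Finset.univ.filter fun i => x i ≠ 0).card ≤ k) :
    ∃ S : Finset ι, S.card = k ∧ (∀ i, 0 < x i → i ∈ S) ∧ (∀ i, x i < 0 → i ∉ S) := by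
  classical
  set P := Finset.univ.filter fun i => 0 < x i
  set N := Finset.univ.filter fun i => x i < 0
  have hP : P.card ≤ k :=
    (Finset.card_le_card (Finset.monotone_filter_right _ fun _ _ => ne_of_gt)).trans hx
  have hN : N.card ≤ k :=
    (Finset.card_le_card (Finset.monotone_filter_right _ fun _ _ => ne_of_lt)).trans hx
  have hPN : P ⊆ Nᶜ := fun i hi => by
    simp only [P, N, Finset.mem_compl, Finset.mem_filter, Finset.mem_univ, true_and] at hi ⊢
    exact hi.le.not_gt
  have hNc : k ≤ Nᶜ.card := by
    rw [Finset.card_compl]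
    omega
  obtain ⟨S, hPS, hSN, hS⟩ := Finset.exists_subsuperset_card_eq hPN hP hNc
  refine ⟨S, hS, fun i hi => hPS (by simpa [P] using hi), fun i hi hiS => ?_⟩
  exact Finset.mem_compl.1 (hSN hiS) (by simpa [N] using hi)

theorem stmt7_general {n k d : ℕ} (hnk : 3 * k ≤ n) (m : ℝ)
    (U : {S : Finset (Fin n) // S.card = k} → EuclideanSpace ℝ (Fin d))
    (V : Fin n → EuclideanSpace ℝ (Fin d))
    (hU : ∀ S, ‖U S‖ = 1)
    (hpos : ∀ S i, i ∈ S.1 → m ≤ ⟪U S, V i⟫)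
    (hneg : ∀ S i, i ∉ S.1 → ⟪U S, V i⟫ ≤ -m)
    (x : Fin n → ℝ) (hx : (Finset.univ.filter fun i => x i ≠ 0).card ≤ k) :
    m * ∑ i, |x i| ≤ ‖∑ i, x i • V i‖ := by
  obtain ⟨S, hS, hxpos, hxneg⟩ :=
    exists_card_eq_pos_subset_disjoint_neg (by rw [Fintype.card_fin]; omega) x hx
  refine mul_sum_abs_le_norm_sum_smul (hU ⟨S, hS⟩) V x fun i => ?_
  exact mul_abs_le_mul_of_sign_pattern (fun h => hpos ⟨S, hS⟩ i (hxpos i h))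
    (fun h => hneg ⟨S, hS⟩ i (hxneg i h))

theorem stmt7 {n k d : ℕ} (hnk : 3 * k ≤ n) (m : ℝ) (hm : 0 < m)
    (U : {S : Finset (Fin n) // S.card = k} → EuclideanSpace ℝ (Fin d))
    (V : Fin n → EuclideanSpace ℝ (Fin d))
    (hU : ∀ S, ‖U S‖ = 1) (hV : ∀ i, ‖V i‖ = 1)
    (hpos : ∀ S i, i ∈ S.1 → m ≤ ⟪U S, V i⟫)
    (hneg : ∀ S i, i ∉ S.1 → ⟪U S, V i⟫ ≤ -m)
    (x : Fin n → ℝ) (hx : (Finset.univ.filter fun i => x i ≠ 0).card ≤ k) :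
    m * ∑ i, |x i| ≤ ‖∑ i, x i • V i‖ :=
  stmt7_general hnk m U V hU hpos hneg x hx
end

section
/- For all natural numbers s < n, there exists a family F of s-element subsets of [n] such that any two distinct members of F intersect in fewer than s/2 elements, and |F| ≥ (n/(4s))^{s/2}. -/
open Finset

/-- middle binomial bound: 2 * C(s, s - s/2) ≤ 2^s for s ≥ 1 -/
lemma aux_middle (s : ℕ) (hs : 1 ≤ s) : 2 * s.choose (s - s/2) ≤ 2 ^ s := by
  rcases Nat.even_or_odd s with he | ho
  · obtain ⟨r, hr⟩ := he
    have hr1 : 1 ≤ r := by omega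
    obtain ⟨t, ht⟩ : ∃ t, r = t + 1 := ⟨r - 1, by omega⟩
    subst ht
    have h1 : s - s/2 = t + 1 := by omega
    have h2 : s = (2*t+1) + 1 := by omega
    rw [h1, h2]
    have hps : ((2*t+1)+1).choose (t+1) = (2*t+1).choose t + (2*t+1).choose (t+1) :=
      Nat.choose_succ_succ _ _
    have hsym : (2*t+1).choose (t+1) = (2*t+1).choose t := by
      have := Nat.choose_symm (n := 2*t+1) (k := t+1) (by omega)
      simpa [show 2*t+1 - (t+1) = t by omega] using this.symm
    have hmid : (2*t+1).choose t ≤ 4 ^ t := Nat.choose_middle_le_pow t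
    calc 2 * ((2*t+1)+1).choose (t+1) = 2*((2*t+1).choose t + (2*t+1).choose (t+1)) := by rw [hps]
      _ ≤ 2*(4^t + 4^t) := by omega
      _ = 4^(t+1) := by ring
      _ ≤ 2^(2*t+1+1) := by
          have : (4:ℕ)^(t+1) = 2^(2*(t+1)) := by
            rw [pow_mul]; norm_num
          rw [this, show 2*(t+1) = 2*t+1+1 by ring]
  · obtain ⟨r, hr⟩ := ho
    subst hr
    have h1 : (2*r+1) - (2*r+1)/2 = r + 1 := by omega
    rw [h1]
    have hsym : (2*r+1).choose (r+1) = (2*r+1).choose r := by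
      have := Nat.choose_symm (n := 2*r+1) (k := r+1) (by omega)
      simpa [show 2*r+1 - (r+1) = r by omega] using this.symm
    have hmid : (2*r+1).choose r ≤ 4 ^ r := Nat.choose_middle_le_pow r
    have h4 : (4:ℕ)^r = 2^(2*r) := by rw [pow_mul]; norm_num
    calc 2 * (2*r+1).choose (r+1) = 2 * (2*r+1).choose r := by rw [hsym]
      _ ≤ 2 * 4^r := by omega
      _ = 2^(2*r+1) := by rw [h4]; ring

/-- ratio representation of binomial coefficients -/
lemma aux_ratio (n h : ℕ) : ∀ m, h ≤ m → m ≤ n →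
    (n.choose m : ℝ) = n.choose h * ∏ j ∈ Icc (h+1) m, (((n:ℝ) - j + 1)/j) := by
  intro m
  induction m with
  | zero => intro h1 _; interval_cases h; simp
  | succ m ih =>
    intro h1 h2
    rcases Nat.lt_or_ge h (m+1) with hlt | hge
    · have hhm : h ≤ m := by omega
      have hmn : m ≤ n := by omega
      rw [Finset.prod_Icc_succ_top (by omega), ← mul_assoc, ← ih hhm hmn]
      have key : (n.choose (m+1)) * (m+1) = n.choose m * (n - m) := Nat.choose_succ_right_eq n m
      have hkey : ((n.choose (m+1)) : ℝ) * (m+1) = (n.choose m : ℝ) * ((n:ℝ) - m) := by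
        have := congrArg (Nat.cast : ℕ → ℝ) key
        push_cast [Nat.cast_sub hmn] at this
        convert this using 2 <;> push_cast <;> ring
      have hm1 : ((m:ℝ)+1) ≠ 0 := by positivity
      rw [show ((n:ℝ) - (↑(m+1)) + 1) = (n:ℝ) - m by push_cast; ring]
      field_simp
      push_cast
      nlinarith [hkey]
    · have hh : h = m + 1 := by omega
      subst hh
      simp
  
/-- extreme pair bound -/
lemma aux_extreme (n s h : ℝ) (h1 : 1 ≤ s) (h4 : 4*s ≤ n) (hh1 : 2*h ≤ s) (hh2 : s ≤ 2*h+1) :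
    n^2*(h+1) ≤ 2*s*(n-h)*(n-s+1) := by
  nlinarith [mul_nonneg (mul_nonneg (by nlinarith : (0:ℝ) ≤ 3*s-2) (by nlinarith : (0:ℝ) ≤ n)) (by nlinarith : (0:ℝ) ≤ n - 2*s), sq_nonneg s, sq_nonneg (n-2*s), mul_nonneg (by nlinarith : (0:ℝ) ≤ s-1) (sq_nonneg s)]

/-- V inequality -/
lemma aux_V (n s h : ℝ) (h4 : 4*s ≤ n) (hpar : s = 2*h ∧ 3 ≤ h ∨ s = 2*h+1 ∧ 2 ≤ h) :
    (n^2-s^2)*(s+h+1)^2 ≤ 4*s^2*(n+1)*(n-s-h) := by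
  rcases hpar with ⟨hse, hh⟩ | ⟨hse, hh⟩ <;> subst hse
  · have h4' : 8*h ≤ n := by linarith
    nlinarith [mul_nonneg (by nlinarith : (0:ℝ) ≤ n-8*h) (by nlinarith : (0:ℝ) ≤ h), sq_nonneg (n-8*h), mul_nonneg (mul_nonneg (by nlinarith : (0:ℝ) ≤ n-8*h) (by nlinarith : (0:ℝ) ≤ h)) (by nlinarith : (0:ℝ) ≤ h), mul_nonneg (mul_nonneg (by nlinarith : (0:ℝ) ≤ n-8*h) (by nlinarith : (0:ℝ) ≤ n)) (by nlinarith : (0:ℝ) ≤ h), mul_nonneg (sq_nonneg (n-8*h)) (by nlinarith : (0:ℝ) ≤ h), mul_nonneg (mul_nonneg (by nlinarith : (0:ℝ) ≤ h-3) (by nlinarith : (0:ℝ) ≤ n)) (by nlinarith : (0:ℝ) ≤ n)]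
  · have h4' : 8*h+4 ≤ n := by linarith
    nlinarith [mul_nonneg (by nlinarith : (0:ℝ) ≤ n-8*h-4) (by nlinarith : (0:ℝ) ≤ h), sq_nonneg (n-8*h-4), mul_nonneg (mul_nonneg (by nlinarith : (0:ℝ) ≤ n-8*h-4) (by nlinarith : (0:ℝ) ≤ h)) (by nlinarith : (0:ℝ) ≤ h), mul_nonneg (mul_nonneg (by nlinarith : (0:ℝ) ≤ n-8*h-4) (by nlinarith : (0:ℝ) ≤ n)) (by nlinarith : (0:ℝ) ≤ h), mul_nonneg (sq_nonneg (n-8*h-4)) (by nlinarith : (0:ℝ) ≤ h), mul_nonneg (mul_nonneg (by nlinarith : (0:ℝ) ≤ h-2) (by nlinarith : (0:ℝ) ≤ n)) (by nlinarith : (0:ℝ) ≤ n)]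

/-- interior pair bound, polynomial form -/
lemma aux_interior (n s h j : ℝ) (h4 : 4*s ≤ n)
    (hpar : s = 2*h ∧ 3 ≤ h ∨ s = 2*h+1 ∧ 2 ≤ h)
    (hj1 : h+2 ≤ j) (hj2 : j ≤ s-1) :
    n^2 * (j * (s+h+1-j)) ≤ s^2 * ((n-j+1) * (n-(s+h+1-j)+1)) := by
  have hV := aux_V n s h h4 hpar
  have hs0 : 0 ≤ s := by rcases hpar with ⟨e,hh⟩|⟨e,hh⟩ <;> nlinarith
  have hns : s ≤ n := by nlinarith
  nlinarith [hV, mul_nonneg (by nlinarith : (0:ℝ) ≤ n^2 - s^2) (sq_nonneg (2*j - (s+h+1)))]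

set_option maxHeartbeats 1000000 in
/-- core binomial inequality -/
lemma aux_core (n s : ℕ) (h1 : 1 ≤ s) (h4 : 4*s ≤ n) :
    ((n:ℝ)/s)^s * (n.choose (s/2) : ℝ)^2 ≤ 4 * (n.choose s : ℝ)^2 := by
  set h := s/2 with hh
  have hhs : 2*h ≤ s ∧ s ≤ 2*h+1 ∧ h + 1 ≤ s := by omega
  have hsn : s ≤ n := by omega
  set r : ℕ → ℝ := fun j => ((n:ℝ) - j + 1)/j with hr
  have hrep : (n.choose s : ℝ) = n.choose h * ∏ j ∈ Icc (h+1) s, r j :=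
    aux_ratio n h s (by omega) hsn
  set P := ∏ j ∈ Icc (h+1) s, r j with hP
  have hS1 : (1:ℝ) ≤ (s:ℝ) := by exact_mod_cast h1
  have hN : (4:ℝ)*(s:ℝ) ≤ (n:ℝ) := by exact_mod_cast h4
  have hH2 : 2*(h:ℝ) ≤ (s:ℝ) := by exact_mod_cast hhs.1
  have hH2' : (s:ℝ) ≤ 2*(h:ℝ)+1 := by exact_mod_cast hhs.2.1
  -- reflection
  have hrefl : P = ∏ j ∈ Icc (h+1) s, r (s+h+1-j) := by
    refine Finset.prod_nbij' (fun a => s+h+1-a) (fun a => s+h+1-a) ?_ ?_ ?_ ?_ ?_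
    · intro a ha; simp only [mem_Icc] at *; omega
    · intro a ha; simp only [mem_Icc] at *; omega
    · intro a ha; simp only [mem_Icc] at *; omega
    · intro a ha; simp only [mem_Icc] at *; omega
    · intro a ha; simp only [mem_Icc] at ha
      have e : s+h+1-(s+h+1-a) = a := by omega
      show r a = r (s+h+1-(s+h+1-a))
      rw [e]
  have hP2 : P^2 = ∏ j ∈ Icc (h+1) s, (r j * r (s+h+1-j)) := by
    rw [Finset.prod_mul_distrib, ← hP, ← hrefl, sq]
  -- extreme pair bound
  have hext : (n:ℝ)^2/(2*(s:ℝ)^2) ≤ r (h+1) * r s := by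
    have he := aux_extreme (n:ℝ) (s:ℝ) (h:ℝ) hS1 hN hH2 hH2'
    have hrh : r (h+1) = ((n:ℝ) - h)/((h:ℝ)+1) := by
      simp only [hr]; push_cast; ring_nf
    have hrs : r s = ((n:ℝ) - s + 1)/(s:ℝ) := by simp only [hr]
    rw [hrh, hrs, div_mul_div_comm, div_le_div_iff₀ (by positivity) (by positivity)]
    nlinarith [he, hS1, sq_nonneg ((n:ℝ)-(s:ℝ))]
  -- interior pair bound
  have hint : ∀ j ∈ Icc (h+2) (s-1), (n:ℝ)^2/(s:ℝ)^2 ≤ r j * r (s+h+1-j) := by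
    intro j hj
    simp only [mem_Icc] at hj
    have hj1 : h + 2 ≤ j := hj.1
    have hj2 : j + 1 ≤ s := by omega
    have hs3 : h + 3 ≤ s := by omega
    have hpar : (s:ℝ) = 2*(h:ℝ) ∧ (3:ℝ) ≤ (h:ℝ) ∨ (s:ℝ) = 2*(h:ℝ)+1 ∧ (2:ℝ) ≤ (h:ℝ) := by
      rcases (by omega : s = 2*h ∧ 3 ≤ h ∨ s = 2*h+1 ∧ 2 ≤ h) with ⟨e,f⟩|⟨e,f⟩
      · exact Or.inl ⟨by exact_mod_cast e, by exact_mod_cast f⟩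
      · exact Or.inr ⟨by exact_mod_cast e, by exact_mod_cast f⟩
    have hjR1 : (h:ℝ)+2 ≤ (j:ℝ) := by exact_mod_cast hj1
    have hjR2 : (j:ℝ) ≤ (s:ℝ)-1 := by
      have : (j:ℝ)+1 ≤ (s:ℝ) := by exact_mod_cast hj2
      linarith
    have hji := aux_interior (n:ℝ) (s:ℝ) (h:ℝ) (j:ℝ) hN hpar hjR1 hjR2
    have hcast : ((s+h+1-j : ℕ) : ℝ) = (s:ℝ)+(h:ℝ)+1-(j:ℝ) := by
      have : j ≤ s+h+1 := by omega
      push_cast [Nat.cast_sub this]; ring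
    have hrj : r j = ((n:ℝ) - j + 1)/(j:ℝ) := rfl
    have hrj' : r (s+h+1-j) = ((n:ℝ) - ((s:ℝ)+(h:ℝ)+1-(j:ℝ)) + 1)/((s:ℝ)+(h:ℝ)+1-(j:ℝ)) := by
      simp only [hr, hcast]
    have hd1 : (0:ℝ) < (j:ℝ) := by linarith
    have hd2 : (0:ℝ) < (s:ℝ)+(h:ℝ)+1-(j:ℝ) := by linarith
    rw [hrj, hrj', div_mul_div_comm, div_le_div_iff₀ (by positivity) (mul_pos hd1 hd2)]
    refine le_trans (le_of_eq (by ring)) (le_trans hji (le_of_eq (by ring)))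
  -- assemble product bound
  have hrpos : ∀ j ∈ Icc (h+1) s, 0 < r j := by
    intro j hj
    simp only [mem_Icc] at hj
    have hj1 : (1:ℝ) ≤ (j:ℝ) := by exact_mod_cast (by omega : 1 ≤ j)
    have hj2 : (j:ℝ) ≤ (n:ℝ) := by exact_mod_cast (by omega : j ≤ n)
    apply div_pos <;> nlinarith
  set k := s - h with hk
  have hQ : ((n:ℝ)^2/(s:ℝ)^2)^k / 4 ≤ P^2 := by
    rw [hP2]
    rcases (by omega : h + 1 = s ∨ h + 2 ≤ s) with hcase | hcase
    · -- k = 1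
      have hk1 : k = 1 := by omega
      have hsing : Icc (h+1) s = {s} := by rw [hcase]; simp
      rw [hsing, Finset.prod_singleton, hk1, pow_one,
        show s+h+1-s = h+1 from by omega, mul_comm (r s) (r (h+1))]
      have h0 : (0:ℝ) ≤ (n:ℝ)^2/(s:ℝ)^2 := by positivity
      have he2 : (n:ℝ)^2/(2*(s:ℝ)^2) = ((n:ℝ)^2/(s:ℝ)^2)/2 := by ring
      rw [he2] at hext
      linarith [hext, h0]
    · -- k ≥ 2
      have hsplit : Icc (h+1) s = insert (h+1) (insert s (Icc (h+2) (s-1))) := by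
        ext a; simp only [mem_insert, mem_Icc]; omega
      have hnm1 : (h+1) ∉ insert s (Icc (h+2) (s-1)) := by
        simp only [mem_insert, mem_Icc]; omega
      have hnm2 : s ∉ Icc (h+2) (s-1) := by simp only [mem_Icc]; omega
      rw [hsplit, Finset.prod_insert hnm1, Finset.prod_insert hnm2]
      have e1 : s+h+1-(h+1) = s := by omega
      rw [e1]
      have hintprod : ((n:ℝ)^2/(s:ℝ)^2)^(s-1+1-(h+2)) ≤ ∏ j ∈ Icc (h+2) (s-1), (r j * r (s+h+1-j)) := by
        rw [← Nat.card_Icc (h+2) (s-1), ← Finset.prod_const]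
        apply Finset.prod_le_prod
        · intro i _; positivity
        · exact hint
      have hus : r s * r (s+h+1-s) = r (h+1) * r s := by
        rw [show s+h+1-s = h+1 by omega]; ring
      rw [hus]
      obtain ⟨t, ht⟩ : ∃ t, k = t + 2 := ⟨k-2, by omega⟩
      have hcard : s-1+1-(h+2) = t := by omega
      rw [hcard] at hintprod
      have hn0 : (0:ℝ) < (n:ℝ) := by linarith
      have hpos2 : (0:ℝ) < (n:ℝ)^2/(2*(s:ℝ)^2) := div_pos (by positivity) (by positivity)
      have hchain : ((n:ℝ)^2/(2*(s:ℝ)^2)) * (((n:ℝ)^2/(2*(s:ℝ)^2)) * ((n:ℝ)^2/(s:ℝ)^2)^t) ≤ (r (h+1) * r s) * ((r (h+1) * r s) * ∏ j ∈ Icc (h+2) (s-1), (r j * r (s+h+1-j))) := by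
        have hintpos : (0:ℝ) ≤ ∏ j ∈ Icc (h+2) (s-1), (r j * r (s+h+1-j)) := by
          apply Finset.prod_nonneg; intro i hi
          have h1' : i ∈ Icc (h+1) s := by simp only [mem_Icc] at *; omega
          have h2' : s+h+1-i ∈ Icc (h+1) s := by simp only [mem_Icc] at *; omega
          exact le_of_lt (mul_pos (hrpos i h1') (hrpos _ h2'))
        have hel : (0:ℝ) ≤ r (h+1) * r s := le_trans (le_of_lt hpos2) hext
        have hq1 : (0:ℝ) ≤ ((n:ℝ)^2/(s:ℝ)^2)^t := by positivity
        have hq2 : (0:ℝ) ≤ ((n:ℝ)^2/(2*(s:ℝ)^2)) * ((n:ℝ)^2/(s:ℝ)^2)^t := by positivity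
        apply mul_le_mul hext _ hq2 hel
        apply mul_le_mul hext hintprod hq1 hel
      calc ((n:ℝ)^2/(s:ℝ)^2)^k / 4
          = ((n:ℝ)^2/(2*(s:ℝ)^2)) * (((n:ℝ)^2/(2*(s:ℝ)^2)) * ((n:ℝ)^2/(s:ℝ)^2)^t) := by
            rw [ht, pow_add]
            ring
        _ ≤ _ := hchain
        _ = _ := by ring
  -- finish
  have hpow : ((n:ℝ)/(s:ℝ))^s ≤ ((n:ℝ)^2/(s:ℝ)^2)^k := by
    have hbase : (1:ℝ) ≤ (n:ℝ)/(s:ℝ) := by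
      rw [le_div_iff₀ (by positivity)]; nlinarith
    have : ((n:ℝ)^2/(s:ℝ)^2)^k = (((n:ℝ)/(s:ℝ))^2)^k := by rw [← div_pow]
    rw [this, ← pow_mul]
    exact pow_le_pow_right₀ hbase (by omega)
  have hch2 : (0:ℝ) ≤ ((n.choose h : ℕ) : ℝ)^2 := by positivity
  rw [hrep]
  calc ((n:ℝ)/s)^s * ((n.choose h:ℕ):ℝ)^2
      ≤ (((n:ℝ)^2/(s:ℝ)^2)^k) * ((n.choose h:ℕ):ℝ)^2 := by
        apply mul_le_mul_of_nonneg_right hpow hch2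
    _ ≤ (4 * P^2) * ((n.choose h:ℕ):ℝ)^2 := by
        apply mul_le_mul_of_nonneg_right _ hch2
        nlinarith [hQ]
    _ = 4 * ((n.choose h:ℕ):ℝ) ^2 * P^2 := by ring
    _ = 4 * (((n.choose h:ℕ):ℝ) * P)^2 := by ring

set_option maxHeartbeats 1000000 in
lemma aux_family (n s : ℕ) (h1 : 1 ≤ s) (hsn : s ≤ n) :
    ∃ F : Finset (Finset (Fin n)),
      (∀ T ∈ F, T.card = s) ∧
      (∀ T ∈ F, ∀ T' ∈ F, T ≠ T' → 2*(T ∩ T').card < s) ∧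
      n.choose s ≤ F.card * (s.choose (s - s/2) * n.choose (s/2)) := by
  classical
  set h := s/2 with hh
  set k := s - s/2 with hk
  set 𝒜 : Finset (Finset (Fin n)) := Finset.univ.powersetCard s with hA
  set good : Finset (Finset (Fin n)) → Prop :=
    fun F => ∀ T ∈ F, ∀ T' ∈ F, T ≠ T' → 2*(T ∩ T').card < s with hgood
  set 𝒮 := 𝒜.powerset.filter good with hS
  have hne : 𝒮.Nonempty := ⟨∅, by simp [hS, hgood]⟩
  obtain ⟨F, hFS, hFmax⟩ := Finset.exists_max_image 𝒮 Finset.card hne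
  rw [hS, Finset.mem_filter, Finset.mem_powerset] at hFS
  obtain ⟨hFA, hFgood⟩ := hFS
  have hcards : ∀ T ∈ F, T.card = s := by
    intro T hT
    exact (Finset.mem_powersetCard.mp (hFA hT)).2
  refine ⟨F, hcards, hFgood, ?_⟩
  -- covering
  have hcover : 𝒜 ⊆ F.biUnion (fun T => 𝒜.filter (fun W => s ≤ 2*(W ∩ T).card)) := by
    intro W hW
    rw [Finset.mem_biUnion]
    have hWcard : W.card = s := (Finset.mem_powersetCard.mp hW).2
    by_cases hWF : W ∈ F
    · refine ⟨W, hWF, ?_⟩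
      rw [Finset.mem_filter]
      refine ⟨hW, ?_⟩
      rw [Finset.inter_self, hWcard]
      omega
    · have hGA : insert W F ⊆ 𝒜 := by
        intro X hX
        rcases Finset.mem_insert.mp hX with rfl | hX
        · exact hW
        · exact hFA hX
      have hGnotgood : ¬ good (insert W F) := by
        intro hg
        have hmem : (insert W F) ∈ 𝒮 := by
          rw [hS, Finset.mem_filter, Finset.mem_powerset]
          exact ⟨hGA, hg⟩
        have := hFmax _ hmem
        rw [Finset.card_insert_of_notMem hWF] at this
        omega
      simp only [hgood] at hGnotgood
      push_neg at hGnotgood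
      obtain ⟨T, hT, T', hT', hne', hcard'⟩ := hGnotgood
      have hcard'' : s ≤ 2*(T ∩ T').card := hcard'
      rcases Finset.mem_insert.mp hT with rfl | hTF
      · rcases Finset.mem_insert.mp hT' with rfl | hT'F
        · exact absurd rfl hne'
        · refine ⟨T', hT'F, ?_⟩
          rw [Finset.mem_filter]
          exact ⟨hW, by rwa [Finset.inter_comm] at hcard''⟩
      · rcases Finset.mem_insert.mp hT' with rfl | hT'F
        · exact ⟨T, hTF, by rw [Finset.mem_filter]; exact ⟨hW, by rwa [Finset.inter_comm] at hcard''⟩⟩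
        · exact absurd hcard'' (by have := hFgood T hTF T' hT'F hne'; omega)
  -- per-T injection bound
  have hbound : ∀ T ∈ F, ((𝒜.filter (fun W => s ≤ 2*(W ∩ T).card)).card ≤ s.choose k * n.choose h) := by
    intro T hT
    have hTcard : T.card = s := hcards T hT
    set pick : Finset (Fin n) → Finset (Fin n) :=
      fun X => if hX : k ≤ X.card then (Finset.exists_subset_card_eq hX).choose else ∅ with hpick
    have hpickP : ∀ X : Finset (Fin n), k ≤ X.card → pick X ⊆ X ∧ (pick X).card = k := by
      intro X hX
      rw [hpick]
      simp only [dif_pos hX]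
      have h1 := (Finset.exists_subset_card_eq hX).choose_spec
      exact ⟨h1.1, h1.2⟩
    have hcardle := Finset.card_le_card_of_injOn
      (f := fun W => (pick (W ∩ T), W \ pick (W ∩ T)))
      (s := 𝒜.filter (fun W => s ≤ 2*(W ∩ T).card))
      (t := (T.powersetCard k) ×ˢ (Finset.univ.powersetCard h))
      ?_ ?_
    · rw [Finset.card_product, Finset.card_powersetCard, Finset.card_powersetCard,
        Finset.card_univ, Fintype.card_fin, hTcard] at hcardle
      exact hcardle
    · intro W hW
      rw [Finset.mem_coe, Finset.mem_filter] at hW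
      obtain ⟨hWA, hWint⟩ := hW
      have hWcard : W.card = s := (Finset.mem_powersetCard.mp hWA).2
      have hkc : k ≤ (W ∩ T).card := by omega
      obtain ⟨hsub, hcardk⟩ := hpickP _ hkc
      rw [Finset.mem_coe, Finset.mem_product]
      constructor
      · rw [Finset.mem_powersetCard]
        exact ⟨hsub.trans Finset.inter_subset_right, hcardk⟩
      · rw [Finset.mem_powersetCard]
        refine ⟨Finset.subset_univ _, ?_⟩
        rw [Finset.card_sdiff_of_subset (hsub.trans Finset.inter_subset_left)]
        omega
    · intro W1 hW1 W2 hW2 heq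
      simp only [Finset.coe_filter, Set.mem_setOf_eq] at hW1 hW2
      obtain ⟨hW1A, hW1i⟩ := hW1
      obtain ⟨hW2A, hW2i⟩ := hW2
      have hW1card : W1.card = s := (Finset.mem_powersetCard.mp hW1A).2
      have hW2card : W2.card = s := (Finset.mem_powersetCard.mp hW2A).2
      have hk1 : k ≤ (W1 ∩ T).card := by omega
      have hk2 : k ≤ (W2 ∩ T).card := by omega
      obtain ⟨hsub1, _⟩ := hpickP _ hk1
      obtain ⟨hsub2, _⟩ := hpickP _ hk2
      have heq1 : pick (W1 ∩ T) = pick (W2 ∩ T) := congrArg Prod.fst heq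
      have heq2 : W1 \ pick (W1 ∩ T) = W2 \ pick (W2 ∩ T) := congrArg Prod.snd heq
      have e1 : pick (W1 ∩ T) ∪ (W1 \ pick (W1 ∩ T)) = W1 :=
        Finset.union_sdiff_of_subset (hsub1.trans Finset.inter_subset_left)
      have e2 : pick (W2 ∩ T) ∪ (W2 \ pick (W2 ∩ T)) = W2 :=
        Finset.union_sdiff_of_subset (hsub2.trans Finset.inter_subset_left)
      rw [← e1, ← e2, heq2, heq1]
  -- combine
  have hAcard : 𝒜.card = n.choose s := by
    rw [hA, Finset.card_powersetCard, Finset.card_univ, Fintype.card_fin]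
  have hle1 : 𝒜.card ≤ ∑ T ∈ F, (𝒜.filter (fun W => s ≤ 2*(W ∩ T).card)).card :=
    le_trans (Finset.card_le_card hcover) Finset.card_biUnion_le
  have hle2 : ∑ T ∈ F, (𝒜.filter (fun W => s ≤ 2*(W ∩ T).card)).card
      ≤ F.card * (s.choose k * n.choose h) := by
    have := Finset.sum_le_card_nsmul F _ (s.choose k * n.choose h) hbound
    simpa [smul_eq_mul] using this
  omega

set_option maxHeartbeats 1000000 in
theorem stmt8 {n s : ℕ} (hs : s < n) :
    ∃ F : Finset (Finset (Fin n)),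
      (∀ T ∈ F, T.card = s) ∧
      (∀ T ∈ F, ∀ T' ∈ F, T ≠ T' → ((T ∩ T').card : ℝ) < (s : ℝ) / 2) ∧
      ((n : ℝ) / (4 * s)) ^ ((s : ℝ) / 2) ≤ (F.card : ℝ) := by
  rcases Nat.eq_zero_or_pos s with rfl | h1
  · refine ⟨{∅}, by simp, by simp, ?_⟩
    norm_num
  rcases lt_or_ge n (4*s) with hlt | h4
  · -- trivial single-set family
    obtain ⟨T₀, _, hT₀c⟩ := Finset.exists_subset_card_eq
      (show s ≤ (Finset.univ : Finset (Fin n)).card by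
        rw [Finset.card_univ, Fintype.card_fin]; omega)
    refine ⟨{T₀}, ?_, ?_, ?_⟩
    · intro T hT; rw [Finset.mem_singleton] at hT; subst hT; exact hT₀c
    · intro T hT T' hT' hne
      rw [Finset.mem_singleton] at hT hT'
      subst hT; subst hT'; exact absurd rfl hne
    · rw [Finset.card_singleton]
      push_cast
      apply Real.rpow_le_one (by positivity) _ (by positivity)
      rw [div_le_one (by positivity)]
      exact_mod_cast le_of_lt hlt
  · -- main case
    obtain ⟨F, hFc, hFgood, hFcount⟩ := aux_family n s h1 (by omega)
    refine ⟨F, hFc, ?_, ?_⟩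
    · intro T hT T' hT' hne
      have := hFgood T hT T' hT' hne
      have h2 : (2 * (T ∩ T').card : ℝ) < (s:ℝ) := by exact_mod_cast this
      linarith
    · set h := s/2 with hh
      set k := s - s/2 with hk
      have hS1 : (1:ℝ) ≤ (s:ℝ) := by exact_mod_cast h1
      have hN4 : (4:ℝ)*(s:ℝ) ≤ (n:ℝ) := by exact_mod_cast h4
      have hcore := aux_core n s h1 h4
      have hmidN := aux_middle s h1
      have hmid : (2 * (s.choose k : ℝ)) ≤ 2^s := by exact_mod_cast hmidN
      have hcountR : ((n.choose s : ℕ):ℝ) ≤ (F.card:ℝ) * ((s.choose k:ℝ) * (n.choose h:ℝ)) := by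
        exact_mod_cast hFcount
      set x := (n:ℝ)/(4*(s:ℝ)) with hx
      have hx0 : (0:ℝ) ≤ x := by positivity
      have hdpos : (0:ℝ) < (n.choose h : ℝ) := by
        exact_mod_cast Nat.choose_pos (show h ≤ n by omega)
      have hkey : x^s ≤ (F.card:ℝ)^2 := by
        have ha0 : (0:ℝ) ≤ ((n.choose s:ℕ):ℝ) := by positivity
        have hsq : ((n.choose s:ℕ):ℝ)^2 ≤ ((F.card:ℝ) * ((s.choose k:ℝ) * (n.choose h:ℝ)))^2 :=
          pow_le_pow_left₀ ha0 hcountR 2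
        have hc1 : ((n:ℝ)/(s:ℝ))^s * (n.choose h:ℝ)^2
            ≤ 4 * ((F.card:ℝ) * ((s.choose k:ℝ) * (n.choose h:ℝ)))^2 := by nlinarith [hcore]
        have hc2 : ((n:ℝ)/(s:ℝ))^s * (n.choose h:ℝ)^2
            ≤ ((2*(s.choose k:ℝ))^2 * (F.card:ℝ)^2) * (n.choose h:ℝ)^2 := by nlinarith [hc1]
        have hc3 : ((n:ℝ)/(s:ℝ))^s ≤ (2*(s.choose k:ℝ))^2 * (F.card:ℝ)^2 :=
          (mul_le_mul_iff_of_pos_right (by positivity : (0:ℝ) < (n.choose h:ℝ)^2)).mp hc2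
        have hc4 : (2*(s.choose k:ℝ))^2 ≤ ((2:ℝ)^s)^2 :=
          pow_le_pow_left₀ (by positivity) hmid 2
        have hc5 : ((n:ℝ)/(s:ℝ))^s ≤ ((2:ℝ)^s)^2 * (F.card:ℝ)^2 := by
          calc ((n:ℝ)/(s:ℝ))^s ≤ (2*(s.choose k:ℝ))^2 * (F.card:ℝ)^2 := hc3
            _ ≤ ((2:ℝ)^s)^2 * (F.card:ℝ)^2 := by nlinarith [hc4, sq_nonneg ((F.card:ℝ))]
        have hxs : x^s * 4^s = ((n:ℝ)/(s:ℝ))^s := by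
          rw [← mul_pow]
          congr 1
          rw [hx]
          field_simp
        have h4s : ((2:ℝ)^s)^2 = 4^s := by
          rw [← pow_mul, show s*2 = 2*s by ring, pow_mul]
          norm_num
        rw [h4s] at hc5
        rw [← hxs] at hc5
        have h4pos : (0:ℝ) < 4^s := by positivity
        nlinarith [hc5, h4pos]
      -- conclude via square root
      have hrw : (x ^ ((s:ℝ)/2))^2 = x^s := by
        have e1 : (x ^ ((s:ℝ)/2))^2 = (x ^ ((s:ℝ)/2)) ^ ((2:ℕ):ℝ) :=
          (Real.rpow_natCast _ 2).symm
        rw [e1, ← Real.rpow_mul hx0,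
          show ((s:ℝ)/2)*(((2:ℕ):ℕ):ℝ) = ((s:ℕ):ℝ) by push_cast; ring,
          Real.rpow_natCast]
      have hrp0 : (0:ℝ) ≤ x ^ ((s:ℝ)/2) := Real.rpow_nonneg hx0 _
      have hFc0 : (0:ℝ) ≤ (F.card:ℝ) := by positivity
      have final : x ^ ((s:ℝ)/2) ≤ (F.card:ℝ) := by
        have h2 : (x ^ ((s:ℝ)/2))^2 ≤ (F.card:ℝ)^2 := by rw [hrw]; exact hkey
        exact (pow_le_pow_iff_left₀ hrp0 hFc0 (by norm_num)).mp h2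
      exact_mod_cast final
end

section
/- Let A ∈ {0,1}^{N×n} and let {V_i}_{i=1}^n, {U_j}_{j=1}^N be unit vectors forming a margin-m relative-bias-0 embedding of A. Let V : R^n → R^d be the linear map with V e_i = V_i. Suppose S ⊆ [n] is shattered by the family of row supports {{i : A_{ji}=1} : j ∈ [N]}, meaning for every subset C ⊆ S there is a row j with {i ∈ S : A_{ji}=1} = C. Then for any x ∈ R^n supported on S, ‖V x‖₂ ≥ m‖x‖₁. -/
open RealInnerProductSpace

/-! A row `j` whose support on `S` is exactly `{i ∈ S : 0 < x i}` gives a unit vector `U j` whose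
inner product with `V i` has the sign of `x i` and size at least `m`, so
`⟪U j, ∑ x i • V i⟫ ≥ m ∑ |x i|`; Cauchy–Schwarz turns this into the bound on `‖∑ x i • V i‖`. -/

lemma mul_abs_le_mul_of_sign {a b m : ℝ} (hpos : 0 < a → m ≤ b) (hneg : a < 0 → b ≤ -m) :
    m * |a| ≤ a * b := by
  rcases lt_trichotomy a 0 with ha | rfl | ha
  · rw [abs_of_neg ha]
    nlinarith [hneg ha]
  · simp
  · rw [abs_of_pos ha]
    nlinarith [hpos ha]

section InnerProductSpace

variable {E ι : Type*} [NormedAddCommGroup E] [InnerProductSpace ℝ E]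

lemma mul_sum_abs_le_inner_sum_smul (s : Finset ι) (u : E) (v : ι → E) (x : ι → ℝ) {m : ℝ}
    (hpos : ∀ i ∈ s, 0 < x i → m ≤ ⟪u, v i⟫) (hneg : ∀ i ∈ s, x i < 0 → ⟪u, v i⟫ ≤ -m) :
    m * ∑ i ∈ s, |x i| ≤ ⟪u, ∑ i ∈ s, x i • v i⟫ := by
  rw [inner_sum, Finset.mul_sum]
  refine Finset.sum_le_sum fun i hi => ?_
  rw [real_inner_smul_right]
  exact mul_abs_le_mul_of_sign (hpos i hi) (hneg i hi)

lemma mul_sum_abs_le_norm_sum_smul_s9 (s : Finset ι) {u : E} (hu : ‖u‖ ≤ 1) (v : ι → E)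
    (x : ι → ℝ) {m : ℝ} (hpos : ∀ i ∈ s, 0 < x i → m ≤ ⟪u, v i⟫)
    (hneg : ∀ i ∈ s, x i < 0 → ⟪u, v i⟫ ≤ -m) :
    m * ∑ i ∈ s, |x i| ≤ ‖∑ i ∈ s, x i • v i‖ :=
  calc m * ∑ i ∈ s, |x i| ≤ ⟪u, ∑ i ∈ s, x i • v i⟫ :=
        mul_sum_abs_le_inner_sum_smul s u v x hpos hneg
    _ ≤ ‖u‖ * ‖∑ i ∈ s, x i • v i‖ := real_inner_le_norm _ _
    _ ≤ ‖∑ i ∈ s, x i • v i‖ := mul_le_of_le_one_left (norm_nonneg _) hu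

end InnerProductSpace

theorem stmt9_general {N n d : ℕ} (A : Fin N → Fin n → Bool)
    (U : Fin N → EuclideanSpace ℝ (Fin d)) (V : Fin n → EuclideanSpace ℝ (Fin d))
    (hU : ∀ j, ‖U j‖ = 1)
    (m : ℝ)
    (hpos : ∀ j i, A j i = true → m ≤ ⟪U j, V i⟫)
    (hneg : ∀ j i, A j i = false → ⟪U j, V i⟫ ≤ -m)
    (S : Finset (Fin n))
    (hshatter : ∀ C ⊆ S, ∃ j : Fin N, S.filter (fun i => A j i = true) = C)
    (x : Fin n → ℝ) (hx : ∀ i, i ∉ S → x i = 0) :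
    m * ∑ i, |x i| ≤ ‖∑ i, x i • V i‖ := by
  obtain ⟨j, hj⟩ := hshatter (S.filter fun i => 0 < x i) (S.filter_subset _)
  have hrow : ∀ i ∈ S, A j i = true ↔ 0 < x i := fun i hi => by
    simpa [hi] using congrArg (i ∈ ·) hj
  have hmemS : ∀ i, x i ≠ 0 → i ∈ S := fun i hxi => by_contra fun hi => hxi (hx i hi)
  refine mul_sum_abs_le_norm_sum_smul_s9 Finset.univ (hU j).le V x
    (fun i _ hxi => hpos j i ((hrow i (hmemS i hxi.ne')).2 hxi))
    (fun i _ hxi => hneg j i ?_)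
  rw [← Bool.not_eq_true, hrow i (hmemS i hxi.ne)]
  exact hxi.not_gt

theorem stmt9 {N n d : ℕ} (A : Fin N → Fin n → Bool)
    (U : Fin N → EuclideanSpace ℝ (Fin d)) (V : Fin n → EuclideanSpace ℝ (Fin d))
    (hU : ∀ j, ‖U j‖ = 1) (hV : ∀ i, ‖V i‖ = 1)
    (m : ℝ) (hm : 0 < m)
    (hpos : ∀ j i, A j i = true → m ≤ ⟪U j, V i⟫)
    (hneg : ∀ j i, A j i = false → ⟪U j, V i⟫ ≤ -m)
    (S : Finset (Fin n))
    (hshatter : ∀ C ⊆ S, ∃ j : Fin N, S.filter (fun i => A j i = true) = C)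
    (x : Fin n → ℝ) (hx : ∀ i, i ∉ S → x i = 0) :
    m * ∑ i, |x i| ≤ ‖∑ i, x i • V i‖ :=
  stmt9_general A U V hU m hpos hneg S hshatter x hx
end

section
/- For all real numbers x, y ≥ 1/2, the quantity (Γ(x)Γ(y)/Γ(x+y))^{1/y} is bounded above and below by positive absolute constants times y/(x+y); that is, there exist universal constants c, C > 0 with c·y/(x+y) ≤ (Γ(x)Γ(y)/Γ(x+y))^{1/y} ≤ C·y/(x+y). -/
open Real

lemma gamma_interp {a b θ τ : ℝ} (ha : 0 < a) (hb : 0 < b) (hθ : 0 ≤ θ) (hτ : 0 ≤ τ)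
    (hsum : θ + τ = 1) : Gamma (θ * a + τ * b) ≤ Gamma a ^ θ * Gamma b ^ τ := by
  have h := Real.convexOn_log_Gamma.2 (Set.mem_Ioi.mpr ha) (Set.mem_Ioi.mpr hb) hθ hτ hsum
  simp only [Function.comp_apply, smul_eq_mul] at h
  have hc : 0 < θ * a + τ * b := by
    have h1 : θ * min a b ≤ θ * a := mul_le_mul_of_nonneg_left (min_le_left a b) hθ
    have h2 : τ * min a b ≤ τ * b := mul_le_mul_of_nonneg_left (min_le_right a b) hτ
    have h3 : 0 < min a b := lt_min ha hb
    nlinarith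
  have h1 : Gamma (θ * a + τ * b) = exp (log (Gamma (θ * a + τ * b))) :=
    (exp_log (Gamma_pos_of_pos hc)).symm
  rw [h1, rpow_def_of_pos (Gamma_pos_of_pos ha), rpow_def_of_pos (Gamma_pos_of_pos hb),
    ← exp_add]
  exact exp_le_exp.mpr (by linarith [h])

lemma wendel_upper {x s : ℝ} (hx : 0 < x) (hs0 : 0 ≤ s) (hs1 : s ≤ 1) :
    Gamma (x + s) ≤ Gamma x * x ^ s := by
  have h := gamma_interp hx (by linarith : (0:ℝ) < x + 1) (by linarith : 0 ≤ 1 - s) hs0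
    (by ring)
  have he : (1 - s) * x + s * (x + 1) = x + s := by ring
  rw [he, Gamma_add_one hx.ne'] at h
  calc Gamma (x + s) ≤ Gamma x ^ (1 - s) * (x * Gamma x) ^ s := h
    _ = Gamma x * x ^ s := by
        rw [mul_rpow hx.le (Gamma_pos_of_pos hx).le]
        rw [show Gamma x ^ (1-s) * (x ^ s * Gamma x ^ s)
            = (Gamma x ^ (1-s) * Gamma x ^ s) * x ^ s by ring,
          ← rpow_add (Gamma_pos_of_pos hx)]
        norm_num

lemma wendel_lower {x s : ℝ} (hx : 0 < x) (hs0 : 0 ≤ s) (hs1 : s ≤ 1) :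
    Gamma x * x * (x + s) ^ (s - 1) ≤ Gamma (x + s) := by
  have hxs : (0:ℝ) < x + s := by linarith
  have h := gamma_interp hxs (by linarith : (0:ℝ) < x + s + 1) hs0 (by linarith : 0 ≤ 1 - s)
    (by ring)
  have he : s * (x + s) + (1 - s) * (x + s + 1) = x + 1 := by ring
  rw [he, Gamma_add_one hx.ne', Gamma_add_one hxs.ne'] at h
  have h2 : x * Gamma x ≤ Gamma (x + s) * (x + s) ^ (1 - s) := by
    calc x * Gamma x ≤ Gamma (x+s) ^ s * ((x+s) * Gamma (x+s)) ^ (1-s) := h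
      _ = Gamma (x+s) * (x+s) ^ (1-s) := by
          rw [mul_rpow hxs.le (Gamma_pos_of_pos hxs).le,
            show Gamma (x+s) ^ s * ((x+s) ^ (1-s) * Gamma (x+s) ^ (1-s))
              = (Gamma (x+s) ^ s * Gamma (x+s) ^ (1-s)) * (x+s) ^ (1-s) by ring,
            ← rpow_add (Gamma_pos_of_pos hxs)]
          norm_num
  have h3 := mul_le_mul_of_nonneg_right h2 (rpow_nonneg hxs.le (s-1))
  rw [mul_assoc (Gamma (x+s)), ← rpow_add hxs] at h3
  norm_num at h3
  calc Gamma x * x * (x+s)^(s-1) = x * Gamma x * (x+s)^(s-1) := by ring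
    _ ≤ Gamma (x+s) := h3

lemma one_le_Gamma {t : ℝ} (ht : 2 ≤ t) : 1 ≤ Gamma t := by
  rcases eq_or_lt_of_le ht with h | h
  · rw [← h, Gamma_two]
  · have h1 : (0:ℝ) < t - 1 := by linarith
    have h := gamma_interp one_pos (by linarith : (0:ℝ) < t)
      (div_nonneg (by linarith : (0:ℝ) ≤ t - 2) h1.le)
      (div_nonneg zero_le_one h1.le) (by field_simp; ring)
    have he : (t-2)/(t-1) * 1 + 1/(t-1) * t = 2 := by field_simp; ring
    rw [he, Gamma_two, Gamma_one, one_rpow, one_mul] at h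
    by_contra hlt
    push_neg at hlt
    have := rpow_lt_one (Gamma_pos_of_pos (by linarith : (0:ℝ) < t)).le hlt
      (div_pos one_pos h1)
    linarith

lemma gamma_le_two {y : ℝ} (h1 : 1/2 ≤ y) (h2 : y ≤ 3/2) : Gamma y ≤ 2 := by
  rcases le_or_gt y 1 with hy | hy
  · have h := gamma_interp (by norm_num : (0:ℝ) < 1/2) one_pos
      (by linarith : (0:ℝ) ≤ 2*(1-y)) (by linarith : (0:ℝ) ≤ 2*y-1) (by ring)
    have he : 2*(1-y) * (1/2) + (2*y-1) * 1 = y := by ring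
    rw [he, Gamma_one, one_rpow, mul_one, Gamma_one_half_eq] at h
    have hsq : Real.sqrt π ≤ 2 := by
      rw [show (2:ℝ) = Real.sqrt 4 by rw [show (4:ℝ) = 2^2 by norm_num, Real.sqrt_sq]; norm_num]
      exact Real.sqrt_le_sqrt (by linarith [Real.pi_le_four])
    calc Gamma y ≤ Real.sqrt π ^ (2*(1-y)) := h
      _ ≤ 2 ^ (2*(1-y)) := rpow_le_rpow (Real.sqrt_nonneg _) hsq (by linarith)
      _ ≤ 2 ^ (1:ℝ) := rpow_le_rpow_of_exponent_le one_le_two (by linarith)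
      _ = 2 := rpow_one 2
  · have h := gamma_interp one_pos two_pos
      (by linarith : (0:ℝ) ≤ 2-y) (by linarith : (0:ℝ) ≤ y-1) (by ring)
    have he : (2-y) * 1 + (y-1) * 2 = y := by ring
    rw [he, Gamma_one, Gamma_two, one_rpow, one_rpow, mul_one] at h
    linarith

lemma gamma_ge {y : ℝ} (h1 : 1/2 ≤ y) (h2 : y ≤ 3/2) : 4/15 ≤ Gamma y := by
  have hy : (0:ℝ) < y := by linarith
  have hg : Gamma (y + 2) = (y+1) * (y * Gamma y) := by
    rw [show y + 2 = (y+1)+1 by ring, Gamma_add_one (by linarith : y+1 ≠ 0),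
      Gamma_add_one hy.ne']
  have h := one_le_Gamma (by linarith : 2 ≤ y + 2)
  rw [hg] at h
  have hq : (y+1)*y ≤ 15/4 := by nlinarith
  have := mul_le_mul_of_nonneg_right hq (Gamma_pos_of_pos hy).le
  nlinarith [Gamma_pos_of_pos hy]

lemma base_bounds {x y : ℝ} (hx : 1/2 ≤ x) (hy1 : 1/2 ≤ y) (hy2 : y ≤ 3/2) :
    Gamma x * (x+y) ^ y / 8 ≤ Gamma (x+y) ∧ Gamma (x+y) ≤ Gamma x * (x+y) ^ y := by
  have hx0 : (0:ℝ) < x := by linarith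
  have hxy : (0:ℝ) < x + y := by linarith
  have hGx := Gamma_pos_of_pos hx0
  rcases le_or_gt y 1 with hy | hy
  · constructor
    · have h := wendel_lower hx0 (by linarith : (0:ℝ) ≤ y) hy
      have key : Gamma x * (x+y) ^ y ≤ 8 * (Gamma x * x * (x+y) ^ (y-1)) := by
        have : (x+y) ^ y = (x+y) ^ (y-1) * (x+y) := by
          rw [← rpow_add_one hxy.ne' (y-1)]; norm_num
        rw [this]
        have hle : x + y ≤ 8 * x := by linarith
        have hpw : (0:ℝ) ≤ (x+y) ^ (y-1) := rpow_nonneg hxy.le _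
        nlinarith [mul_pos hGx (rpow_pos_of_pos hxy (y-1))]
      linarith
    · calc Gamma (x+y) ≤ Gamma x * x ^ y := wendel_upper hx0 (by linarith) hy
        _ ≤ Gamma x * (x+y) ^ y :=
          mul_le_mul_of_nonneg_left (rpow_le_rpow hx0.le (by linarith) (by linarith)) hGx.le
  · have hs0 : (0:ℝ) ≤ y - 1 := by linarith
    have hs1 : y - 1 ≤ 1 := by linarith
    have hne : x + (y-1) ≠ 0 := by positivity
    have hg : Gamma (x+y) = (x + (y-1)) * Gamma (x + (y-1)) := by
      rw [show x + y = (x + (y-1)) + 1 by ring, Gamma_add_one hne]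
    have hxs : (0:ℝ) < x + (y-1) := by linarith
    constructor
    · -- lower bound
      have h := wendel_lower hx0 hs0 hs1
      have h2 : Gamma x * x * (x+(y-1)) ^ (y-1) ≤ Gamma (x+y) := by
        rw [hg]
        have hp : (x+(y-1)) ^ (y-1) = (x+(y-1)) ^ (y-1-1) * (x+(y-1)) := by
          rw [← rpow_add_one hxs.ne' (y-1-1)]; norm_num
        calc Gamma x * x * (x+(y-1)) ^ (y-1)
            = (x+(y-1)) * (Gamma x * x * (x+(y-1)) ^ (y-1-1)) := by rw [hp]; ring
          _ ≤ (x+(y-1)) * Gamma (x+(y-1)) := mul_le_mul_of_nonneg_left h hxs.le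
      have h3 : (x+y) ^ (y-1) / 2 ≤ (x+(y-1)) ^ (y-1) := by
        have ha : (x+y)/3 ≤ x+(y-1) := by linarith
        have hb : ((x+y)/3) ^ (y-1) ≤ (x+(y-1)) ^ (y-1) :=
          rpow_le_rpow (by positivity) ha hs0
        have hc : ((x+y)/3) ^ (y-1) = (x+y)^(y-1) / (3:ℝ)^(y-1) :=
          div_rpow hxy.le (by norm_num : (0:ℝ) ≤ 3) (y-1)
        have hd : (3:ℝ)^(y-1) ≤ 2 := by
          calc (3:ℝ)^(y-1) ≤ (3:ℝ)^(1/2:ℝ) :=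
                rpow_le_rpow_of_exponent_le (by norm_num) (by linarith)
            _ ≤ 2 := by
                rw [← Real.sqrt_eq_rpow]
                rw [show (2:ℝ) = Real.sqrt 4 by
                  rw [show (4:ℝ) = 2^2 by norm_num, Real.sqrt_sq]; norm_num]
                exact Real.sqrt_le_sqrt (by norm_num)
        have he : (x+y)^(y-1) / 2 ≤ (x+y)^(y-1) / (3:ℝ)^(y-1) := by
          apply div_le_div_of_nonneg_left (rpow_nonneg hxy.le _) _ hd
          positivity
        calc (x+y)^(y-1)/2 ≤ (x+y)^(y-1)/(3:ℝ)^(y-1) := he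
          _ = ((x+y)/3) ^ (y-1) := hc.symm
          _ ≤ (x+(y-1)) ^ (y-1) := hb
      -- Gamma x * (x+y)^y / 8 ≤ Gamma x * x * (x+y)^(y-1) / 2 ≤ Gamma x * x * (x+(y-1))^(y-1)
      have hy4 : x + y ≤ 4 * x := by linarith
      have hpw : (0:ℝ) < (x+y) ^ (y-1) := rpow_pos_of_pos hxy _
      have hsp : (x+y) ^ y = (x+y) ^ (y-1) * (x+y) := by
        rw [← rpow_add_one hxy.ne' (y-1)]; norm_num
      calc Gamma x * (x+y) ^ y / 8 = Gamma x * ((x+y)^(y-1) * (x+y)) / 8 := by rw [hsp]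
        _ ≤ Gamma x * x * ((x+y)^(y-1)/2) := by
            rw [div_le_iff₀ (by norm_num : (0:ℝ) < 8)]
            have key := mul_le_mul_of_nonneg_left hy4 (mul_nonneg hGx.le hpw.le)
            nlinarith [key]
        _ ≤ Gamma x * x * (x+(y-1))^(y-1) := by
            apply mul_le_mul_of_nonneg_left h3 (by positivity)
        _ ≤ Gamma (x+y) := h2
    · -- upper bound
      rw [hg]
      calc (x+(y-1)) * Gamma (x+(y-1)) ≤ (x+y) * (Gamma x * x ^ (y-1)) := by
            apply mul_le_mul (by linarith) (wendel_upper hx0 hs0 hs1)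
              (Gamma_pos_of_pos hxs).le hxy.le
        _ ≤ (x+y) * (Gamma x * (x+y) ^ (y-1)) := by
            apply mul_le_mul_of_nonneg_left
              (mul_le_mul_of_nonneg_left
                (rpow_le_rpow hx0.le (by linarith) hs0) hGx.le) hxy.le
        _ = Gamma x * (x+y) ^ y := by
            have hsp : (x+y) ^ y = (x+y) ^ (y-1) * (x+y) := by
              rw [← rpow_add_one hxy.ne' (y-1)]; norm_num
            rw [hsp]; ring

lemma ypow_le_two {y : ℝ} (h1 : 1/2 ≤ y) (h2 : y ≤ 3/2) : y ^ (y:ℝ) ≤ 2 := by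
  have hy0 : (0:ℝ) ≤ y := by linarith
  rcases le_or_gt y 1 with hy | hy
  · have := rpow_le_one hy0 hy hy0
    linarith
  · calc y ^ (y:ℝ) ≤ (3/2:ℝ) ^ (y:ℝ) := rpow_le_rpow hy0 h2 hy0
      _ ≤ (3/2:ℝ) ^ (3/2:ℝ) := rpow_le_rpow_of_exponent_le (by norm_num) h2
      _ ≤ 2 := by
        have ha : (0:ℝ) ≤ (3/2:ℝ) ^ (3/2:ℝ) := rpow_nonneg (by norm_num) _
        have hsq : ((3/2:ℝ) ^ (3/2:ℝ)) ^ (2:ℕ) = (3/2:ℝ) ^ (3:ℝ) := by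
          rw [← rpow_natCast ((3/2:ℝ) ^ (3/2:ℝ)) 2, ← rpow_mul (by norm_num : (0:ℝ) ≤ 3/2)]
          norm_num
        have h3 : (3/2:ℝ) ^ (3:ℝ) = 27/8 := by
          rw [show (3:ℝ) = ((3:ℕ):ℝ) by norm_num, rpow_natCast]; norm_num
        nlinarith [hsq, h3]

lemma half_le_ypow {y : ℝ} (h1 : 1/2 ≤ y) (h2 : y ≤ 3/2) : 1/2 ≤ y ^ (y:ℝ) := by
  have hy0 : (0:ℝ) < y := by linarith
  rcases le_or_gt y 1 with hy | hy
  · have := rpow_le_rpow_of_exponent_ge hy0 hy hy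
    rw [rpow_one] at this
    linarith
  · have := rpow_le_rpow_of_exponent_le hy.le (by linarith : (0:ℝ) ≤ y)
    rw [rpow_zero] at this
    linarith

lemma small_pow {y : ℝ} (h1 : 1/2 ≤ y) : ((1:ℝ)/100) ^ (y:ℝ) ≤ 1/10 := by
  have key : ((1:ℝ)/100) ^ ((1:ℝ)/2) = 1/10 := by
    have : ((1:ℝ)/100) = ((1:ℝ)/10) ^ (2:ℝ) := by
      rw [show (2:ℝ) = ((2:ℕ):ℝ) by norm_num, rpow_natCast]; norm_num
    rw [this, ← rpow_mul (by norm_num : (0:ℝ) ≤ 1/10)]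
    norm_num
  calc ((1:ℝ)/100) ^ (y:ℝ) ≤ ((1:ℝ)/100) ^ ((1:ℝ)/2) :=
        rpow_le_rpow_of_exponent_ge (by norm_num) (by norm_num) h1
    _ = 1/10 := key

lemma big_pow {y : ℝ} (h1 : 1/2 ≤ y) : (100:ℝ) ≤ (10000:ℝ) ^ (y:ℝ) := by
  have key : ((10000:ℝ)) ^ ((1:ℝ)/2) = 100 := by
    have : ((10000:ℝ)) = (100:ℝ) ^ (2:ℝ) := by
      rw [show (2:ℝ) = ((2:ℕ):ℝ) by norm_num, rpow_natCast]; norm_num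
    rw [this, ← rpow_mul (by norm_num : (0:ℝ) ≤ 100)]
    norm_num
  calc (100:ℝ) = (10000:ℝ) ^ ((1:ℝ)/2) := key.symm
    _ ≤ (10000:ℝ) ^ (y:ℝ) := rpow_le_rpow_of_exponent_le (by norm_num) h1

lemma exp_bound {t : ℝ} (ht : 1/2 ≤ t) : (1 + 1/t) ^ (t:ℝ) ≤ 3 := by
  have ht0 : (0:ℝ) < t := by linarith
  have h1 : (1:ℝ) + 1/t ≤ exp (1/t) := by linarith [add_one_le_exp (1/t)]
  have h2 : (1 + 1/t) ^ (t:ℝ) ≤ (exp (1/t)) ^ (t:ℝ) :=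
    rpow_le_rpow (by positivity) h1 ht0.le
  have h3 : (exp (1/t)) ^ (t:ℝ) = exp 1 := by
    rw [rpow_def_of_pos (exp_pos _), log_exp]
    congr 1
    field_simp
  calc (1 + 1/t) ^ (t:ℝ) ≤ exp 1 := h2.trans_eq h3
    _ ≤ 3 := by linarith [exp_one_lt_d9]

lemma main_bounds : ∀ (n : ℕ) (y : ℝ), 1/2 ≤ y → y ≤ 3/2 + n → ∀ x : ℝ, 1/2 ≤ x →
    ((1/100) * (y/(x+y)))^(y:ℝ) ≤ Gamma x * Gamma y / Gamma (x+y) ∧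
    Gamma x * Gamma y / Gamma (x+y) ≤ ((10000:ℝ) * (y/(x+y)))^(y:ℝ) := by
  intro n
  induction n with
  | zero =>
    intro y hy1 hy2' x hx
    have hy2 : y ≤ 3/2 := by simpa using hy2'
    have hx0 : (0:ℝ) < x := by linarith
    have hy0 : (0:ℝ) < y := by linarith
    have hxy : (0:ℝ) < x + y := by linarith
    have hGx := Gamma_pos_of_pos hx0
    have hGy := Gamma_pos_of_pos hy0
    have hGxy := Gamma_pos_of_pos hxy
    obtain ⟨hL, hU⟩ := base_bounds hx hy1 hy2
    have hpw : (0:ℝ) < (x+y) ^ (y:ℝ) := rpow_pos_of_pos hxy y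
    constructor
    · have step1 : ((1/100) * (y/(x+y)))^(y:ℝ) ≤ (4/15) / (x+y)^(y:ℝ) := by
        have expand : ((1/100) * (y/(x+y)))^(y:ℝ) = ((1:ℝ)/100)^(y:ℝ) * y^(y:ℝ) / (x+y)^(y:ℝ) := by
          rw [mul_rpow (by norm_num : (0:ℝ) ≤ 1/100) (by positivity),
            div_rpow hy0.le hxy.le]
          ring
        rw [expand]
        gcongr
        calc ((1:ℝ)/100)^(y:ℝ) * y^(y:ℝ) ≤ (1/10) * 2 :=
              mul_le_mul (small_pow hy1) (ypow_le_two hy1 hy2)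
                (rpow_nonneg hy0.le _) (by norm_num)
          _ ≤ 4/15 := by norm_num
      have step2 : (4/15:ℝ) / (x+y)^(y:ℝ) ≤ Gamma y / (x+y)^(y:ℝ) := by
        gcongr
        exact gamma_ge hy1 hy2
      have step3 : Gamma y / (x+y)^(y:ℝ) ≤ Gamma x * Gamma y / Gamma (x+y) := by
        rw [div_le_div_iff₀ hpw hGxy]
        nlinarith [mul_le_mul_of_nonneg_left hU hGy.le]
      linarith
    · have u1 : Gamma x * Gamma y / Gamma (x+y) ≤ 8 * Gamma y / (x+y)^(y:ℝ) := by
        rw [div_le_div_iff₀ hGxy hpw]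
        nlinarith [mul_le_mul_of_nonneg_left hL hGy.le]
      have u2 : (8:ℝ) * Gamma y / (x+y)^(y:ℝ) ≤ 16 / (x+y)^(y:ℝ) := by
        gcongr
        linarith [gamma_le_two hy1 hy2]
      have u3 : (16:ℝ) / (x+y)^(y:ℝ) ≤ ((10000:ℝ) * (y/(x+y)))^(y:ℝ) := by
        have expand : ((10000:ℝ) * (y/(x+y)))^(y:ℝ) = (10000:ℝ)^(y:ℝ) * y^(y:ℝ) / (x+y)^(y:ℝ) := by
          rw [mul_rpow (by norm_num : (0:ℝ) ≤ 10000) (by positivity),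
            div_rpow hy0.le hxy.le]
          ring
        rw [expand]
        gcongr
        calc (16:ℝ) ≤ 100 * (1/2) := by norm_num
          _ ≤ (10000:ℝ)^(y:ℝ) * y^(y:ℝ) :=
            mul_le_mul (big_pow hy1) (half_le_ypow hy1 hy2) (by norm_num)
              (by positivity)
      linarith
  | succ n ih =>
    intro y hy1 hy2 x hx
    rcases le_or_gt y (3/2 + n) with hc | hc
    · exact ih y hy1 hc x hx
    · have hy'1 : 1/2 ≤ y - 1 := by
        have : (0:ℝ) ≤ n := Nat.cast_nonneg n
        linarith
      have hy'2 : y - 1 ≤ 3/2 + n := by push_cast at hy2 ⊢; linarith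
      obtain ⟨ihL, ihU⟩ := ih (y-1) hy'1 hy'2 x hx
      have hx0 : (0:ℝ) < x := by linarith
      have hy'0 : (0:ℝ) < y - 1 := by linarith
      have hy0 : (0:ℝ) < y := by linarith
      have hxy' : (0:ℝ) < x + (y-1) := by linarith
      have hxy : (0:ℝ) < x + y := by linarith
      have hgy : Gamma y = (y-1) * Gamma (y-1) := by
        rw [show y = (y-1) + 1 by ring, Gamma_add_one hy'0.ne']
        norm_num
      have hgxy : Gamma (x+y) = (x+(y-1)) * Gamma (x+(y-1)) := by
        rw [show x+y = (x+(y-1)) + 1 by ring, Gamma_add_one hxy'.ne']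
      have hGx := Gamma_pos_of_pos hx0
      have hGy' := Gamma_pos_of_pos hy'0
      have hGxy' := Gamma_pos_of_pos hxy'
      have hBeq : Gamma x * Gamma y / Gamma (x+y)
          = (Gamma x * Gamma (y-1) / Gamma (x+(y-1))) * ((y-1)/(x+(y-1))) := by
        rw [hgy, hgxy]
        field_simp
      have hq0 : (0:ℝ) < (y-1)/(x+(y-1)) := by positivity
      have hp0 : (0:ℝ) < y/(x+y) := by positivity
      have hqp : (y-1)/(x+(y-1)) ≤ y/(x+y) := by
        rw [div_le_div_iff₀ hxy' hxy]
        nlinarith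
      have hyy : (y:ℝ) = (y-1) + 1 := by ring
      constructor
      · -- lower bound
        rw [hBeq]
        have key : ((1/100) * (y/(x+y)))^(y:ℝ) ≤ ((1/100) * ((y-1)/(x+(y-1))))^(y-1:ℝ) * ((y-1)/(x+(y-1))) := by
          have e1 : ((1/100) * (y/(x+y)))^(y:ℝ) = ((1:ℝ)/100)^(y:ℝ) * (y/(x+y))^(y:ℝ) :=
            mul_rpow (by norm_num) hp0.le
          have e2 : ((1/100) * ((y-1)/(x+(y-1))))^(y-1:ℝ) * ((y-1)/(x+(y-1)))
              = ((1:ℝ)/100)^(y-1:ℝ) * ((y-1)/(x+(y-1)))^(y:ℝ) := by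
            rw [mul_rpow (by norm_num : (0:ℝ) ≤ 1/100) hq0.le]
            have hq' : ((y-1)/(x+(y-1)))^(y-1:ℝ) * ((y-1)/(x+(y-1))) = ((y-1)/(x+(y-1)))^(y:ℝ) := by
              rw [← rpow_add_one hq0.ne' (y-1)]; norm_num
            rw [mul_assoc, hq']
          rw [e1, e2]
          have e3 : ((1:ℝ)/100)^(y:ℝ) = ((1:ℝ)/100)^(y-1:ℝ) * (1/100) := by
            rw [← rpow_add_one (by norm_num : ((1:ℝ)/100) ≠ 0) (y-1)]; norm_num
          rw [e3]
          -- goal : (1/100)^(y-1) * (1/100) * (y/(x+y))^y ≤ (1/100)^(y-1) * ((y-1)/(x+(y-1)))^y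
          have main : (1/100:ℝ) * (y/(x+y))^(y:ℝ) ≤ ((y-1)/(x+(y-1)))^(y:ℝ) := by
            have hple : y/(x+y) ≤ (1 + 1/(y-1)) * ((y-1)/(x+(y-1))) := by
              have : (1 + 1/(y-1)) * ((y-1)/(x+(y-1))) = y/(x+(y-1)) := by
                field_simp
                ring
              rw [this]
              gcongr
              linarith
            have hb : (y/(x+y))^(y:ℝ) ≤ ((1 + 1/(y-1)) * ((y-1)/(x+(y-1))))^(y:ℝ) :=
              rpow_le_rpow hp0.le hple hy0.le
            have hc2 : ((1 + 1/(y-1)) * ((y-1)/(x+(y-1))))^(y:ℝ)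
                = (1 + 1/(y-1))^(y:ℝ) * ((y-1)/(x+(y-1)))^(y:ℝ) :=
              mul_rpow (by positivity) hq0.le
            have hd : (1 + 1/(y-1))^(y:ℝ) ≤ 9 := by
              have hne : ((1:ℝ) + 1/(y-1)) ≠ 0 := by positivity
              have hsplit : (1 + 1/(y-1))^(y:ℝ) = (1 + 1/(y-1))^(y-1:ℝ) * (1 + 1/(y-1)) := by
                rw [← rpow_add_one hne (y-1)]; norm_num
              rw [hsplit]
              have h1 : (1 + 1/(y-1))^(y-1:ℝ) ≤ 3 := exp_bound hy'1
              have h2 : (1:ℝ) + 1/(y-1) ≤ 3 := by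
                have : 1/(y-1) ≤ 2 := by
                  rw [div_le_iff₀ hy'0]; linarith
                linarith
              calc (1 + 1/(y-1))^(y-1:ℝ) * (1 + 1/(y-1)) ≤ 3 * 3 :=
                    mul_le_mul h1 h2 (by positivity) (by norm_num)
                _ = 9 := by norm_num
            have hqy : (0:ℝ) ≤ ((y-1)/(x+(y-1)))^(y:ℝ) := rpow_nonneg hq0.le _
            calc (1/100:ℝ) * (y/(x+y))^(y:ℝ)
                ≤ (1/100) * ((1 + 1/(y-1))^(y:ℝ) * ((y-1)/(x+(y-1)))^(y:ℝ)) := by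
                  apply mul_le_mul_of_nonneg_left _ (by norm_num)
                  rw [← hc2]; exact hb
              _ ≤ (1/100) * (9 * ((y-1)/(x+(y-1)))^(y:ℝ)) := by
                  apply mul_le_mul_of_nonneg_left
                    (mul_le_mul_of_nonneg_right hd hqy) (by norm_num)
              _ ≤ ((y-1)/(x+(y-1)))^(y:ℝ) := by linarith [hqy]
          calc ((1:ℝ)/100)^(y-1:ℝ) * (1/100) * (y/(x+y))^(y:ℝ)
              = ((1:ℝ)/100)^(y-1:ℝ) * ((1/100) * (y/(x+y))^(y:ℝ)) := by ring
            _ ≤ ((1:ℝ)/100)^(y-1:ℝ) * ((y-1)/(x+(y-1)))^(y:ℝ) :=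
                mul_le_mul_of_nonneg_left main (rpow_nonneg (by norm_num) _)
        calc ((1/100) * (y/(x+y)))^(y:ℝ)
            ≤ ((1/100) * ((y-1)/(x+(y-1))))^(y-1:ℝ) * ((y-1)/(x+(y-1))) := key
          _ ≤ (Gamma x * Gamma (y-1) / Gamma (x+(y-1))) * ((y-1)/(x+(y-1))) :=
              mul_le_mul_of_nonneg_right ihL hq0.le
      · -- upper bound
        rw [hBeq]
        have step1 : (Gamma x * Gamma (y-1) / Gamma (x+(y-1))) * ((y-1)/(x+(y-1)))
            ≤ ((10000:ℝ) * ((y-1)/(x+(y-1))))^(y-1:ℝ) * ((y-1)/(x+(y-1))) :=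
          mul_le_mul_of_nonneg_right ihU hq0.le
        have step2 : ((10000:ℝ) * ((y-1)/(x+(y-1))))^(y-1:ℝ) * ((y-1)/(x+(y-1)))
            ≤ ((10000:ℝ) * (y/(x+y)))^(y:ℝ) := by
          have e2 : ((10000:ℝ) * ((y-1)/(x+(y-1))))^(y-1:ℝ) * ((y-1)/(x+(y-1)))
              = (10000:ℝ)^(y-1:ℝ) * ((y-1)/(x+(y-1)))^(y:ℝ) := by
            rw [mul_rpow (by norm_num : (0:ℝ) ≤ 10000) hq0.le]
            have hq' : ((y-1)/(x+(y-1)))^(y-1:ℝ) * ((y-1)/(x+(y-1))) = ((y-1)/(x+(y-1)))^(y:ℝ) := by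
              rw [← rpow_add_one hq0.ne' (y-1)]; norm_num
            rw [mul_assoc, hq']
          have e1 : ((10000:ℝ) * (y/(x+y)))^(y:ℝ) = (10000:ℝ)^(y:ℝ) * (y/(x+y))^(y:ℝ) :=
            mul_rpow (by norm_num) hp0.le
          rw [e1, e2]
          have h1 : ((y-1)/(x+(y-1)))^(y:ℝ) ≤ (y/(x+y))^(y:ℝ) :=
            rpow_le_rpow hq0.le hqp hy0.le
          have h2 : (10000:ℝ)^(y-1:ℝ) ≤ (10000:ℝ)^(y:ℝ) :=
            rpow_le_rpow_of_exponent_le (by norm_num) (by linarith)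
          have h3 : (0:ℝ) ≤ (10000:ℝ)^(y-1:ℝ) := rpow_nonneg (by norm_num) _
          have h4 : (0:ℝ) ≤ (y/(x+y))^(y:ℝ) := rpow_nonneg hp0.le _
          calc (10000:ℝ)^(y-1:ℝ) * ((y-1)/(x+(y-1)))^(y:ℝ)
              ≤ (10000:ℝ)^(y-1:ℝ) * (y/(x+y))^(y:ℝ) :=
                mul_le_mul_of_nonneg_left h1 h3
            _ ≤ (10000:ℝ)^(y:ℝ) * (y/(x+y))^(y:ℝ) :=
                mul_le_mul_of_nonneg_right h2 h4
        linarith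

theorem stmt11 :
    ∃ c C : ℝ, 0 < c ∧ 0 < C ∧
      ∀ x y : ℝ, 1 / 2 ≤ x → 1 / 2 ≤ y →
        c * (y / (x + y)) ≤ (Real.Gamma x * Real.Gamma y / Real.Gamma (x + y)) ^ (1 / y) ∧
        (Real.Gamma x * Real.Gamma y / Real.Gamma (x + y)) ^ (1 / y) ≤ C * (y / (x + y)) := by
  refine ⟨1/100, 10000, by norm_num, by norm_num, ?_⟩
  intro x y hx hy
  have hy0 : (0:ℝ) < y := by linarith
  have hx0 : (0:ℝ) < x := by linarith
  have hxy : (0:ℝ) < x + y := by linarith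
  have hyn : y ≤ 3/2 + (⌈y⌉₊:ℝ) := by
    have h1 := Nat.le_ceil y
    linarith
  obtain ⟨hL, hU⟩ := main_bounds ⌈y⌉₊ y hy hyn x hx
  have hB0 : (0:ℝ) < Gamma x * Gamma y / Gamma (x+y) := by
    have := Gamma_pos_of_pos hx0
    have := Gamma_pos_of_pos hy0
    have := Gamma_pos_of_pos hxy
    positivity
  have hinv : (0:ℝ) ≤ 1/y := by positivity
  constructor
  · have h := rpow_le_rpow (rpow_nonneg (by positivity) y) hL hinv
    rwa [← rpow_mul (by positivity : (0:ℝ) ≤ 1/100 * (y/(x+y))),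
      mul_one_div_cancel hy0.ne', rpow_one] at h
  · have h := rpow_le_rpow hB0.le hU hinv
    · rwa [← rpow_mul (by positivity : (0:ℝ) ≤ (10000:ℝ) * (y/(x+y))),
        mul_one_div_cancel hy0.ne', rpow_one] at h
end

section
/- Suppose unit vectors {U_j}_{j=1}^N, {V_i}_{i=1}^n in R^d form a margin-m relative-bias-0 embedding of S_{n,k} with 0 < m < 1. Then for every T ⊂ [n] with k ≤ |T| ≤ min(k + 2km/(1−m), n−1), there exist a unit vector h ∈ R^d and c ∈ R such that ⟨h, V_i⟩ ≥ c for all i ∈ T and ⟨h, V_j⟩ ≤ c for all j ∉ T. -/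
lemma count_mem {α : Type*} [DecidableEq α] (T : Finset α) (k : ℕ) (i : α) (hi : i ∈ T) :
    ((T.powersetCard (k+1)).filter (fun S => i ∈ S)).card = (T.erase i).card.choose k := by
  rw [← Finset.card_powersetCard]
  refine Finset.card_bij' (fun S _ => S.erase i) (fun S _ => insert i S) ?hi ?hj ?li ?ri
  case hi =>
    intro S hS
    simp only [Finset.mem_filter, Finset.mem_powersetCard] at hS
    simp only [Finset.mem_powersetCard]
    exact ⟨fun x hx => Finset.mem_erase.mpr ⟨(Finset.mem_erase.mp hx).1,
      hS.1.1 (Finset.mem_erase.mp hx).2⟩,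
      by rw [Finset.card_erase_of_mem hS.2, hS.1.2]; omega⟩
  case hj =>
    intro S hS
    simp only [Finset.mem_powersetCard] at hS
    have hiS : i ∉ S := fun h => (Finset.mem_erase.mp (hS.1 h)).1 rfl
    simp only [Finset.mem_filter, Finset.mem_powersetCard]
    refine ⟨⟨?_, ?_⟩, Finset.mem_insert_self i S⟩
    · intro x hx
      rcases Finset.mem_insert.mp hx with h | h
      · exact h ▸ hi
      · exact Finset.mem_of_mem_erase (hS.1 h)
    · rw [Finset.card_insert_of_notMem hiS, hS.2]
  case li =>
    intro S hS
    simp only [Finset.mem_filter] at hS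
    exact Finset.insert_erase hS.2
  case ri =>
    intro S hS
    simp only [Finset.mem_powersetCard] at hS
    have hiS : i ∉ S := fun h => (Finset.mem_erase.mp (hS.1 h)).1 rfl
    exact Finset.erase_insert hiS

open RealInnerProductSpace

theorem stmt13 {n k d : ℕ} (m : ℝ) (hm0 : 0 < m) (hm1 : m < 1)
    (U : {S : Finset (Fin n) // S.card = k} → EuclideanSpace ℝ (Fin d))
    (V : Fin n → EuclideanSpace ℝ (Fin d))
    (hU : ∀ S, ‖U S‖ = 1) (hV : ∀ i, ‖V i‖ = 1)
    (hpos : ∀ S i, i ∈ S.1 → m ≤ ⟪U S, V i⟫)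
    (hneg : ∀ S i, i ∉ S.1 → ⟪U S, V i⟫ ≤ -m)
    (T : Finset (Fin n)) (hTlow : k ≤ T.card)
    (hThigh : (T.card : ℝ) ≤ min ((k : ℝ) + 2 * k * m / (1 - m)) ((n : ℝ) - 1)) :
    ∃ (h : EuclideanSpace ℝ (Fin d)) (c : ℝ), ‖h‖ = 1 ∧
      (∀ i ∈ T, c ≤ ⟪h, V i⟫) ∧ (∀ j ∉ T, ⟪h, V j⟫ ≤ c) := by
  classical
  have hm1' : (0:ℝ) < 1 - m := by linarith
  set t := T.card with ht
  set C := t.choose k with hC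
  have hCpos : 0 < C := Nat.choose_pos hTlow
  -- there is an element outside T
  have hTn : t < n := by
    have h1 : (t:ℝ) ≤ (n:ℝ) - 1 := le_trans hThigh (min_le_right _ _)
    have h2 : (t:ℝ) + 1 ≤ (n:ℝ) := by linarith
    exact_mod_cast h2
  obtain ⟨j0, hj0⟩ : ∃ j, j ∉ T := by
    by_contra hcon
    push_neg at hcon
    have : T = Finset.univ := Finset.eq_univ_iff_forall.mpr hcon
    rw [this, Finset.card_univ, Fintype.card_fin] at ht
    omega
  -- the separating (unnormalized) vector
  set g : EuclideanSpace ℝ (Fin d) := ∑ S ∈ (T.powersetCard k).attach,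
      U ⟨S.1, (Finset.mem_powersetCard.mp S.2).2⟩ with hg
  have hinner : ∀ v, ⟪g, v⟫ = ∑ S ∈ (T.powersetCard k).attach,
      ⟪U ⟨S.1, (Finset.mem_powersetCard.mp S.2).2⟩, v⟫ := fun v => sum_inner _ _ v
  have hcardP : (T.powersetCard k).card = C := by
    rw [Finset.card_powersetCard]
  -- upper bound outside T
  have hout : ∀ j, j ∉ T → ⟪g, V j⟫ ≤ -((C:ℝ) * m) := by
    intro j hj
    rw [hinner]
    have hle : ∀ S ∈ (T.powersetCard k).attach,
        ⟪U ⟨S.1, (Finset.mem_powersetCard.mp S.2).2⟩, V j⟫ ≤ -m := by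
      intro S _
      apply hneg
      intro hmem
      exact hj ((Finset.mem_powersetCard.mp S.2).1 hmem)
    calc ∑ S ∈ (T.powersetCard k).attach,
        ⟪U ⟨S.1, (Finset.mem_powersetCard.mp S.2).2⟩, V j⟫
        ≤ ∑ _S ∈ (T.powersetCard k).attach, (-m) := Finset.sum_le_sum hle
      _ = -((C:ℝ) * m) := by
          rw [Finset.sum_const, Finset.card_attach, hcardP]
          simp [mul_comm]
  -- g is nonzero
  have hgC : -((C:ℝ) * m) < 0 := by
    have : (0:ℝ) < (C:ℝ) * m := mul_pos (by exact_mod_cast hCpos) hm0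
    linarith
  have hgne : g ≠ 0 := by
    intro h0
    have := hout j0 hj0
    rw [h0, inner_zero_left] at this
    linarith
  have hN : (0:ℝ) < ‖g‖ := norm_pos_iff.mpr hgne
  -- lower bound inside T
  have hin : ∀ i, i ∈ T → -((C:ℝ) * m) ≤ ⟪g, V i⟫ := by
    intro i hi
    obtain ⟨k', rfl⟩ : ∃ k', k = k' + 1 := by
      cases k with
      | zero =>
        exfalso
        have h1 : (t:ℝ) ≤ (0:ℝ) + 2 * 0 * m / (1 - m) := by
          have := le_trans hThigh (min_le_left _ _); simpa using this
        have h2 : (t:ℝ) ≤ 0 := by rw [mul_zero, zero_mul] at h1; simpa using h1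
        have h3 : t = 0 := by exact_mod_cast le_antisymm h2 (by positivity)
        have := Finset.card_eq_zero.mp h3
        rw [this] at hi
        exact absurd hi (Finset.notMem_empty i)
      | succ k' => exact ⟨k', rfl⟩
    set r := ((T.powersetCard (k'+1)).filter (fun S => i ∈ S)).card with hr
    have hrval : r = (T.erase i).card.choose k' := count_mem T k' i hi
    have htpos : 0 < t := Finset.card_pos.mpr ⟨i, hi⟩
    have herase : (T.erase i).card = t - 1 := Finset.card_erase_of_mem hi
    -- Nat identity : t * r = C * (k'+1)
    have hnat : t * r = C * (k' + 1) := by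
      rw [hrval, herase, hC]
      have := Nat.add_one_mul_choose_eq (t-1) k'
      have ht1 : t - 1 + 1 = t := by omega
      rw [ht1] at this
      exact this
    -- lower bound the inner product
    have hlow : (r:ℝ) * m - ((C:ℝ) - r) ≤ ⟪g, V i⟫ := by
      rw [hinner]
      have hle : ∀ S ∈ (T.powersetCard (k'+1)).attach,
          (if i ∈ S.1 then m else (-1:ℝ)) ≤
          ⟪U ⟨S.1, (Finset.mem_powersetCard.mp S.2).2⟩, V i⟫ := by
        intro S _
        by_cases hmem : i ∈ S.1
        · simp only [hmem, if_true]
          exact hpos _ _ hmem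
        · simp only [hmem, if_false]
          have h1 : |⟪U ⟨S.1, (Finset.mem_powersetCard.mp S.2).2⟩, V i⟫| ≤ 1 := by
            have := abs_real_inner_le_norm (U ⟨S.1, (Finset.mem_powersetCard.mp S.2).2⟩) (V i)
            rwa [hU, hV, one_mul] at this
          linarith [abs_le.mp h1]
      have hsum : ∑ S ∈ (T.powersetCard (k'+1)).attach, (if i ∈ S.1 then m else (-1:ℝ))
          = (r:ℝ) * m - ((C:ℝ) - r) := by
        rw [Finset.sum_attach (T.powersetCard (k'+1)) (fun S => if i ∈ S then m else (-1:ℝ))]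
        rw [Finset.sum_ite, Finset.sum_const, Finset.sum_const]
        have hnotcard : ((T.powersetCard (k'+1)).filter (fun S => ¬ i ∈ S)).card = C - r := by
          have := Finset.card_filter_add_card_filter_not
            (s := T.powersetCard (k'+1)) (p := fun S => i ∈ S)
          rw [hcardP] at this
          omega
        rw [← hr, hnotcard]
        have hrC : r ≤ C := by
          rw [← hcardP, hr]
          exact Finset.card_filter_le _ _
        simp only [nsmul_eq_mul, mul_neg, mul_one, Nat.cast_sub hrC]
        ring
      calc (r:ℝ) * m - ((C:ℝ) - r)
          = ∑ S ∈ (T.powersetCard (k'+1)).attach, (if i ∈ S.1 then m else (-1:ℝ)) := hsum.symm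
        _ ≤ _ := Finset.sum_le_sum hle
    -- the key inequality : r * (1+m) ≥ C * (1-m)
    have hkey : (C:ℝ) * (1 - m) ≤ (r:ℝ) * (1 + m) := by
      have hth : (t:ℝ) ≤ (k'+1:ℝ) + 2 * (k'+1:ℝ) * m / (1 - m) := by
        have := le_trans hThigh (min_le_left _ _); push_cast at this ⊢; convert this using 3
      have ht1m : (t:ℝ) * (1 - m) ≤ ((k':ℝ)+1) * (1 + m) := by
        have hdiv : 2 * ((k':ℝ)+1) * m / (1 - m) * (1 - m) = 2 * ((k':ℝ)+1) * m :=
          div_mul_cancel₀ _ (ne_of_gt hm1')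
        nlinarith [mul_le_mul_of_nonneg_right hth (le_of_lt hm1'), hdiv]
      have hnatR : (t:ℝ) * r = (C:ℝ) * ((k':ℝ)+1) := by exact_mod_cast hnat
      have htR : (0:ℝ) < (t:ℝ) := by exact_mod_cast htpos
      have hCR : (0:ℝ) ≤ (C:ℝ) := by positivity
      nlinarith [mul_le_mul_of_nonneg_left ht1m hCR]
    nlinarith [hlow, hkey]
  -- assemble
  refine ⟨‖g‖⁻¹ • g, ‖g‖⁻¹ * (-((C:ℝ) * m)), ?_, ?_, ?_⟩
  · rw [norm_smul, norm_inv, norm_norm, inv_mul_cancel₀ (ne_of_gt hN)]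
  · intro i hi
    rw [real_inner_smul_left]
    exact mul_le_mul_of_nonneg_left (hin i hi) (by positivity)
  · intro j hj
    rw [real_inner_smul_left]
    exact mul_le_mul_of_nonneg_left (hout j hj) (by positivity)
end

section
/- Suppose unit vectors {U_j}, {V_i} in R^d form a margin-m relative-bias-0 embedding of S_{n,k} with 0 < m < 1. Then for every T ⊂ [n] with max(1, k − 2m(n−k)/(1−m)) ≤ |T| ≤ k, there exist a unit vector h ∈ R^d and c ∈ R such that ⟨h, V_i⟩ ≥ c for all i ∈ T and ⟨h, V_j⟩ ≤ c for all j ∉ T. -/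
/-!
Take `h = ∑ U S` over the `k`-sets `S ⊇ T`; there are `N = C(n-t, k-t)` of them, `t = #T`.
Every `i ∈ T` lies in all of them, so `⟪h, V i⟫ ≥ m N`. For `j ∉ T`, the `A = C(n-t-1, k-t-1)`
sets containing `j` contribute at most `1` each and the other `B = C(n-t-1, k-t)` at most `-m`.
Pascal's rule gives `B (k-t) = A (n-k)`, and the lower bound on `t` is exactly what turns this
into `A (1-m) ≤ 2 m B`, i.e. `A - m B ≤ m N`. Normalising `h` finishes the proof.
-/

open RealInnerProductSpace Finset

section kSupersets

variable {α : Type*} [Fintype α] [DecidableEq α] {k : ℕ} {T : Finset α}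

def kSupersets (k : ℕ) (T : Finset α) : Finset {S : Finset α // S.card = k} := {S | T ⊆ S.1}

-- `S ↦ S \ T` is a bijection onto the `(k - #T)`-subsets of `G \ T`.
theorem card_kSupersets_filter_subset {G : Finset α} (hTG : T ⊆ G) (hTk : #T ≤ k) :
    #{S ∈ kSupersets k T | S.1 ⊆ G} = (#G - #T).choose (k - #T) := by
  rw [← card_sdiff_of_subset hTG, ← card_powersetCard]
  refine card_bij' (fun S _ => S.1 \ T)
    (fun A hA => ⟨A ∪ T, ?_⟩) (fun S hS => ?_) (fun A hA => ?_) (fun S hS => ?_) (fun A hA => ?_)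
  · rw [mem_powersetCard] at hA
    rw [card_union_of_disjoint (sdiff_disjoint.mono_left hA.1), hA.2]
    omega
  · simp only [kSupersets, mem_filter, mem_univ, true_and] at hS
    rw [mem_powersetCard, card_sdiff_of_subset hS.1, S.2]
    exact ⟨sdiff_subset_sdiff hS.2 le_rfl, rfl⟩
  · rw [mem_powersetCard] at hA
    simp only [kSupersets, mem_filter, mem_univ, true_and]
    exact ⟨subset_union_right, union_subset (hA.1.trans sdiff_subset) hTG⟩
  · simp only [kSupersets, mem_filter, mem_univ, true_and] at hS
    exact Subtype.ext (sdiff_union_of_subset hS.1)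
  · rw [mem_powersetCard] at hA
    exact union_sdiff_cancel_right (sdiff_disjoint.mono_left hA.1)

theorem card_kSupersets (hTk : #T ≤ k) :
    #(kSupersets k T) = (Fintype.card α - #T).choose (k - #T) := by
  simpa using card_kSupersets_filter_subset (subset_univ T) hTk

theorem kSupersets_nonempty (hTk : #T ≤ k) (hk : k ≤ Fintype.card α) :
    (kSupersets k T).Nonempty := by
  rw [← card_pos, card_kSupersets hTk]
  exact Nat.choose_pos (by omega)

theorem filter_mem_kSupersets (j : α) :
    {S ∈ kSupersets k T | j ∈ S.1} = kSupersets k (insert j T) := by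
  ext S
  simp [kSupersets, insert_subset_iff, and_comm]

-- Pascal's rule `C(N-t-1, k-t) (k-t) = C(N-t-1, k-t-1) (N-k)` with `N = card α`, `t = #T`.
theorem card_filter_notMem_kSupersets_mul {j : α} (hj : j ∉ T) (hTk : #T < k) :
    #{S ∈ kSupersets k T | j ∉ S.1} * (k - #T) =
      #{S ∈ kSupersets k T | j ∈ S.1} * (Fintype.card α - k) := by
  have hT : T ⊆ univ.erase j := subset_erase.2 ⟨subset_univ T, hj⟩
  have hnot : #{S ∈ kSupersets k T | j ∉ S.1} = #{S ∈ kSupersets k T | S.1 ⊆ univ.erase j} := by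
    simp [subset_erase]
  rw [hnot, card_kSupersets_filter_subset hT hTk.le, filter_mem_kSupersets,
    card_kSupersets (by rw [card_insert_of_notMem hj]; omega), card_insert_of_notMem hj,
    card_erase_of_mem (mem_univ j), card_univ]
  obtain ⟨r, hr⟩ : ∃ r, k - #T = r + 1 := ⟨k - #T - 1, by omega⟩
  have hN : Fintype.card α - (#T + 1) - r = Fintype.card α - k := by omega
  rw [hr, show Fintype.card α - 1 - #T = Fintype.card α - (#T + 1) by omega,
    show k - (#T + 1) = r by omega, Nat.choose_succ_right_eq, hN]

theorem filter_mem_kSupersets_eq_empty {j : α} (hj : j ∉ T) (hTk : #T = k) :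
    {S ∈ kSupersets k T | j ∈ S.1} = ∅ := by
  rw [filter_mem_kSupersets, ← not_nonempty_iff_eq_empty]
  rintro ⟨S, hS⟩
  simp only [kSupersets, mem_filter, mem_univ, true_and] at hS
  have := card_le_card hS
  rw [S.2, card_insert_of_notMem hj] at this
  omega

theorem card_filter_mem_kSupersets_mul_le {m : ℝ} (hm0 : 0 < m) (hm1 : m < 1) {j : α}
    (hj : j ∉ T) (hTk : #T ≤ k)
    (hm : ((k : ℝ) - #T) * (1 - m) ≤ 2 * m * ((Fintype.card α : ℝ) - k)) :
    (#{S ∈ kSupersets k T | j ∈ S.1} : ℝ) * (1 - m) ≤ 2 * m * #{S ∈ kSupersets k T | j ∉ S.1} := by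
  rcases hTk.eq_or_lt with hTk | hTk
  · rw [filter_mem_kSupersets_eq_empty hj hTk, card_empty, Nat.cast_zero, zero_mul]
    positivity
  have hkT : (1 : ℝ) ≤ k - #T := by
    rw [le_sub_iff_add_le, add_comm]
    exact_mod_cast (hTk : #T + 1 ≤ k)
  have hkN : (0 : ℝ) < Fintype.card α - k := by nlinarith
  -- lets `exact_mod_cast` below cast the truncated subtraction `card α - k`
  have hkN' : k ≤ Fintype.card α := by exact_mod_cast (sub_pos.1 hkN).le
  have hPascal : (#{S ∈ kSupersets k T | j ∉ S.1} : ℝ) * (k - #T) =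
      #{S ∈ kSupersets k T | j ∈ S.1} * (Fintype.card α - k) := by
    exact_mod_cast card_filter_notMem_kSupersets_mul hj hTk
  refine le_of_mul_le_mul_right ?_ hkN
  calc (#{S ∈ kSupersets k T | j ∈ S.1} : ℝ) * (1 - m) * (Fintype.card α - k)
      = #{S ∈ kSupersets k T | j ∉ S.1} * ((k - #T) * (1 - m)) := by rw [← mul_assoc, hPascal]; ring
    _ ≤ #{S ∈ kSupersets k T | j ∉ S.1} * (2 * m * (Fintype.card α - k)) := by gcongr
    _ = 2 * m * #{S ∈ kSupersets k T | j ∉ S.1} * (Fintype.card α - k) := by ring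

end kSupersets

section InnerProductSpace

variable {ι E : Type*} [NormedAddCommGroup E] [InnerProductSpace ℝ E]

theorem inner_sum_le_card_filter_sub_mul (s : Finset ι) (p : ι → Prop) [DecidablePred p]
    {u : ι → E} {w : E} {m : ℝ} (h1 : ∀ a ∈ s, ⟪u a, w⟫ ≤ 1)
    (hm : ∀ a ∈ s, ¬p a → ⟪u a, w⟫ ≤ -m) :
    ⟪∑ a ∈ s, u a, w⟫ ≤ #{a ∈ s | p a} - m * #{a ∈ s | ¬p a} := by
  rw [sum_inner, ← sum_filter_add_sum_filter_not s p]
  calc ∑ a ∈ s with p a, ⟪u a, w⟫ + ∑ a ∈ s with ¬p a, ⟪u a, w⟫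
      ≤ ∑ a ∈ s with p a, (1 : ℝ) + ∑ a ∈ s with ¬p a, -m := by
        gcongr with a ha a ha
        · exact h1 a (mem_filter.1 ha).1
        · exact hm a (mem_filter.1 ha).1 (mem_filter.1 ha).2
    _ = #{a ∈ s | p a} - m * #{a ∈ s | ¬p a} := by simp; ring

theorem exists_norm_eq_one_separating {V : ι → E} {T : Finset ι} {h : E} (hh : h ≠ 0) {c : ℝ}
    (hT : ∀ i ∈ T, c ≤ ⟪h, V i⟫) (hTc : ∀ j ∉ T, ⟪h, V j⟫ ≤ c) :
    ∃ (h' : E) (c' : ℝ), ‖h'‖ = 1 ∧ (∀ i ∈ T, c' ≤ ⟪h', V i⟫) ∧ (∀ j ∉ T, ⟪h', V j⟫ ≤ c') := by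
  have hpos : 0 < ‖h‖⁻¹ := inv_pos.2 (norm_pos_iff.2 hh)
  refine ⟨‖h‖⁻¹ • h, ‖h‖⁻¹ * c, norm_smul_inv_norm hh, fun i hi => ?_, fun j hj => ?_⟩
  · rw [real_inner_smul_left]
    exact mul_le_mul_of_nonneg_left (hT i hi) hpos.le
  · rw [real_inner_smul_left]
    exact mul_le_mul_of_nonneg_left (hTc j hj) hpos.le

end InnerProductSpace

theorem stmt14 {n k d : ℕ} (m : ℝ) (hm0 : 0 < m) (hm1 : m < 1)
    (U : {S : Finset (Fin n) // S.card = k} → EuclideanSpace ℝ (Fin d))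
    (V : Fin n → EuclideanSpace ℝ (Fin d))
    (hU : ∀ S, ‖U S‖ = 1) (hV : ∀ i, ‖V i‖ = 1)
    (hpos : ∀ S i, i ∈ S.1 → m ≤ ⟪U S, V i⟫)
    (hneg : ∀ S i, i ∉ S.1 → ⟪U S, V i⟫ ≤ -m)
    (T : Finset (Fin n)) (hThigh : T.card ≤ k)
    (hTlow : max 1 ((k : ℝ) - 2 * m * ((n : ℝ) - (k : ℝ)) / (1 - m)) ≤ (T.card : ℝ)) :
    ∃ (h : EuclideanSpace ℝ (Fin d)) (c : ℝ), ‖h‖ = 1 ∧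
      (∀ i ∈ T, c ≤ ⟪h, V i⟫) ∧ (∀ j ∉ T, ⟪h, V j⟫ ≤ c) := by
  classical
  have hT : (1 : ℝ) ≤ #T := (le_max_left _ _).trans hTlow
  have hmargin : ((k : ℝ) - #T) * (1 - m) ≤ 2 * m * ((n : ℝ) - k) := by
    have := (le_max_right _ _).trans hTlow
    rwa [sub_le_comm, le_div_iff₀ (sub_pos.2 hm1)] at this
  have hkn : k ≤ n := by
    have : (#T : ℝ) ≤ n := by exact_mod_cast (card_le_univ T).trans_eq (Fintype.card_fin n)
    by_contra! hnk
    have : (n : ℝ) < k := by exact_mod_cast hnk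
    nlinarith
  set 𝒜 := kSupersets k T
  have hin : ∀ i ∈ T, #𝒜 * m ≤ ⟪∑ S ∈ 𝒜, U S, V i⟫ := fun i hi => by
    rw [sum_inner, ← nsmul_eq_mul]
    exact card_nsmul_le_sum _ _ _ fun S hS => hpos S i ((mem_filter.1 hS).2 hi)
  have hout : ∀ j ∉ T, ⟪∑ S ∈ 𝒜, U S, V j⟫ ≤ #𝒜 * m := fun j hj => by
    have hsum := inner_sum_le_card_filter_sub_mul 𝒜 (fun S => j ∈ S.1)
      (fun S _ => (real_inner_le_norm _ _).trans_eq (by rw [hU, hV, one_mul]))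
      (fun S _ hjS => hneg S j hjS)
    have hcount := card_filter_mem_kSupersets_mul_le hm0 hm1 hj hThigh (by simpa using hmargin)
    rw [← card_filter_add_card_filter_not (s := 𝒜) (fun S => j ∈ S.1)]
    push_cast
    linarith
  have hne : ∑ S ∈ 𝒜, U S ≠ 0 := by
    obtain ⟨i, hi⟩ := card_pos.1 (by exact_mod_cast hT : 0 < #T)
    have h𝒜 : (0 : ℝ) < #𝒜 := by
      exact_mod_cast (kSupersets_nonempty hThigh (by simpa using hkn)).card_pos
    intro h0
    have := hin i hi
    rw [h0, inner_zero_left] at this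
    nlinarith
  exact exists_norm_eq_one_separating hne hin hout
end

section
/- Let {U_j}_{j=1}^N, {V_i}_{i=1}^n be unit vectors forming a margin-m* relative-bias-τ embedding of A ∈ {0,1}^{N×n}, where m* = min{min_{A_{ji}=1}(⟨U_j,V_i⟩ − τ), min_{A_{ji}=0}(τ − ⟨U_j,V_i⟩)} > 0. Then (1/T)·log L_sigmoid(U,V;T,Tτ) → −m* as T → ∞, where L_sigmoid(U,V;t,b) = Σ_{j,i} log(1 + exp((−1)^{A_{ji}}(t⟨U_j,V_i⟩ − b))). -/
open RealInnerProductSpace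

theorem stmt17 {N n d : ℕ} (A : Fin N → Fin n → Bool)
    (U : Fin N → EuclideanSpace ℝ (Fin d)) (V : Fin n → EuclideanSpace ℝ (Fin d))
    (hU : ∀ j, ‖U j‖ = 1) (hV : ∀ i, ‖V i‖ = 1)
    (τ m : ℝ) (hm : 0 < m)
    (hmin : IsLeast
      {γ : ℝ | ∃ (j : Fin N) (i : Fin n),
        γ = if A j i then ⟪U j, V i⟫ - τ else τ - ⟪U j, V i⟫} m) :
    Filter.Tendsto
      (fun T : ℝ => (1 / T) *
        Real.log (∑ j, ∑ i,
          Real.log (1 + Real.exp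
            ((if A j i then (-1 : ℝ) else 1) * (T * ⟪U j, V i⟫ - T * τ)))))
      Filter.atTop (nhds (-m)) := by
  classical
  set γ : Fin N → Fin n → ℝ :=
    fun j i => if A j i then ⟪U j, V i⟫ - τ else τ - ⟪U j, V i⟫ with hγ
  have hsign : ∀ (T : ℝ) (j : Fin N) (i : Fin n),
      (if A j i then (-1 : ℝ) else 1) * (T * ⟪U j, V i⟫ - T * τ) = -(T * γ j i) := by
    intro T j i
    by_cases h : A j i <;> simp [hγ, h] <;> ring
  simp only [hsign]
  have hge : ∀ j i, m ≤ γ j i := fun j i => hmin.2 ⟨j, i, rfl⟩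
  obtain ⟨j0, i0, hm0⟩ := hmin.1
  have hNn : (0:ℝ) < (N : ℝ) * n := by
    have h1 := j0.pos; have h2 := i0.pos
    have : (0:ℝ) < (N:ℝ) := by exact_mod_cast h1
    have : (0:ℝ) < (n:ℝ) := by exact_mod_cast h2
    positivity
  set S : ℝ → ℝ := fun T => ∑ j, ∑ i, Real.log (1 + Real.exp (-(T * γ j i))) with hS
  have key : ∀ᶠ T in Filter.atTop,
      -m - Real.log 2 / T ≤ 1/T * Real.log (S T) ∧
      1/T * Real.log (S T) ≤ Real.log ((N:ℝ)*n) / T - m := by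
    filter_upwards [Filter.eventually_ge_atTop 1] with T hT
    have hT0 : (0:ℝ) < T := lt_of_lt_of_le one_pos hT
    have term_nonneg : ∀ j i, 0 ≤ Real.log (1 + Real.exp (-(T * γ j i))) := by
      intro j i
      exact Real.log_nonneg (by nlinarith [Real.exp_pos (-(T * γ j i))])
    -- lower bound on S
    have hx1 : Real.exp (-(T * m)) ≤ 1 := by
      rw [Real.exp_le_one_iff]; nlinarith
    have hlow : Real.exp (-(T*m)) / 2 ≤ S T := by
      have h1 : Real.exp (-(T*m))/2 ≤ Real.log (1 + Real.exp (-(T*m))) := by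
        set x := Real.exp (-(T*m)) with hx
        have hx0 : 0 < x := Real.exp_pos _
        have hkey := Real.log_le_sub_one_of_pos (show (0:ℝ) < (1+x)⁻¹ by positivity)
        rw [Real.log_inv] at hkey
        have hinv : (1+x) * (1+x)⁻¹ = 1 := mul_inv_cancel₀ (by positivity)
        nlinarith [hkey, hinv, hx0.le, hx1]
      have h2 : Real.log (1 + Real.exp (-(T * γ j0 i0))) ≤ S T := by
        calc Real.log (1 + Real.exp (-(T * γ j0 i0)))
            ≤ ∑ i, Real.log (1 + Real.exp (-(T * γ j0 i))) :=
              Finset.single_le_sum (fun i _ => term_nonneg j0 i) (Finset.mem_univ i0)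
          _ ≤ S T :=
              Finset.single_le_sum
                (fun j _ => Finset.sum_nonneg fun i _ => term_nonneg j i)
                (Finset.mem_univ j0)
      have hm0' : m = γ j0 i0 := hm0
      rw [← hm0'] at h2
      linarith
    have hSpos : 0 < S T := lt_of_lt_of_le (by positivity) hlow
    -- upper bound on S
    have hup : S T ≤ ((N:ℝ)*n) * Real.exp (-(T*m)) := by
      have : S T ≤ ∑ _j : Fin N, ∑ _i : Fin n, Real.exp (-(T*m)) := by
        refine Finset.sum_le_sum fun j _ => Finset.sum_le_sum fun i _ => ?_
        have h1 : Real.log (1 + Real.exp (-(T * γ j i))) ≤ Real.exp (-(T * γ j i)) := by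
          have := Real.log_le_sub_one_of_pos
            (show (0:ℝ) < 1 + Real.exp (-(T * γ j i)) by positivity)
          linarith
        have h2 : Real.exp (-(T * γ j i)) ≤ Real.exp (-(T*m)) := by
          apply Real.exp_le_exp.2
          nlinarith [hge j i]
        linarith
      simpa [Finset.sum_const, Finset.card_univ, mul_assoc] using this
    -- take logs
    have hlog_low : -(T*m) - Real.log 2 ≤ Real.log (S T) := by
      have := Real.log_le_log (by positivity) hlow
      rwa [Real.log_div (Real.exp_ne_zero _) (by norm_num), Real.log_exp] at this
    have hlog_up : Real.log (S T) ≤ Real.log ((N:ℝ)*n) + (-(T*m)) := by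
      have := Real.log_le_log hSpos hup
      rwa [Real.log_mul (ne_of_gt hNn) (Real.exp_ne_zero _), Real.log_exp] at this
    constructor
    · have := mul_le_mul_of_nonneg_left hlog_low (le_of_lt (one_div_pos.2 hT0))
      have heq : 1/T * (-(T*m) - Real.log 2) = -m - Real.log 2 / T := by
        field_simp
      linarith [heq ▸ this]
    · have := mul_le_mul_of_nonneg_left hlog_up (le_of_lt (one_div_pos.2 hT0))
      have heq : 1/T * (Real.log ((N:ℝ)*n) + (-(T*m))) = Real.log ((N:ℝ)*n) / T - m := by
        field_simp; ring
      linarith [heq ▸ this]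
  have hdiv : ∀ c : ℝ, Filter.Tendsto (fun T : ℝ => c / T) Filter.atTop (nhds 0) :=
    fun c => Filter.Tendsto.div_atTop tendsto_const_nhds Filter.tendsto_id
  have hlo : Filter.Tendsto (fun T : ℝ => -m - Real.log 2 / T) Filter.atTop (nhds (-m)) := by
    have := Filter.Tendsto.sub (tendsto_const_nhds (x := -m)) (hdiv (Real.log 2))
    simpa using this
  have hhi : Filter.Tendsto (fun T : ℝ => Real.log ((N:ℝ)*n) / T - m) Filter.atTop (nhds (-m)) := by
    have := Filter.Tendsto.sub (hdiv (Real.log ((N:ℝ)*n))) (tendsto_const_nhds (x := m))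
    simpa using this
  exact tendsto_of_tendsto_of_tendsto_of_le_of_le' hlo hhi
    (key.mono fun T h => h.1) (key.mono fun T h => h.2)
end

section
/- Let A ∈ {0,1}^{N×n} with A_{j i₁} = A_{j i₂} = 1 for some row j and columns i₁ ≠ i₂, and let {U_j}, {V_i} be unit vectors with ⟨U_j, V_{i₁}⟩ ≠ ⟨U_j, V_{i₂}⟩. Define the InfoNCE loss L(T) = −Σ_{(j,i): A_{ji}=1} log(exp(T⟨U_j,V_i⟩) / Σ_ℓ exp(T⟨U_j,V_ℓ⟩)). Then L(T) → +∞ as T → ∞; in fact L(T) ≥ log(1 + exp(T·|⟨U_j,V_{i₁}⟩ − ⟨U_j,V_{i₂}⟩|)). -/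
/-!
Every summand `-log (softmax)` of the loss is nonnegative, so the loss dominates the two summands
of row `j` at `i₁` and `i₂`. With `S` the row's partition function and `x, y` the two scores,
`exp x + exp y ≤ S` gives `log S - min x y ≥ log (1 + exp |x - y|)` and `log S - max x y ≥ 0`.
-/

open RealInnerProductSpace Real Finset

noncomputable def infoNCELoss {ι κ : Type*} [Fintype ι] [Fintype κ]
    (A : κ → ι → Bool) (s : κ → ι → ℝ) : ℝ :=
  -∑ j, ∑ i, if A j i then log (exp (s j i) / ∑ ℓ, exp (s j ℓ)) else 0

section LogSumExp

variable {ι : Type*} [Fintype ι]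

lemma le_log_sum_exp (s : ι → ℝ) (i : ι) : s i ≤ log (∑ ℓ, exp (s ℓ)) := by
  rw [le_log_iff_exp_le (sum_pos (fun ℓ _ => exp_pos (s ℓ)) ⟨i, mem_univ i⟩)]
  exact single_le_sum (f := fun ℓ => exp (s ℓ)) (fun ℓ _ => (exp_pos _).le) (mem_univ i)

lemma neg_log_exp_div_sum_exp (s : ι → ℝ) (i : ι) :
    -log (exp (s i) / ∑ ℓ, exp (s ℓ)) = log (∑ ℓ, exp (s ℓ)) - s i := by
  rw [log_div (exp_ne_zero _) (sum_pos (fun ℓ _ => exp_pos (s ℓ)) ⟨i, mem_univ i⟩).ne', log_exp]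
  ring

lemma log_one_add_exp_abs_sub_le {x y S : ℝ} (hS : exp x + exp y ≤ S) :
    log (1 + exp |x - y|) ≤ (log S - x) + (log S - y) := by
  wlog hyx : y ≤ x generalizing x y
  · have := this (x := y) (y := x) (by linarith) (by linarith)
    rw [abs_sub_comm]
    linarith
  have hSpos : 0 < S := by linarith [exp_pos x, exp_pos y]
  have hx : x ≤ log S := by
    rw [le_log_iff_exp_le hSpos]
    linarith [exp_pos y]
  have hy : log (exp y * (1 + exp (x - y))) ≤ log S :=
    log_le_log (by positivity) (by rwa [mul_add, mul_one, ← exp_add, add_sub_cancel, add_comm])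
  rw [log_mul (exp_ne_zero y) (by positivity), log_exp] at hy
  rw [abs_of_nonneg (sub_nonneg.mpr hyx)]
  linarith

lemma log_one_add_exp_abs_sub_le_neg_log_softmax {i₁ i₂ : ι} (hi : i₁ ≠ i₂) (s : ι → ℝ) :
    log (1 + exp |s i₁ - s i₂|) ≤
      -log (exp (s i₁) / ∑ ℓ, exp (s ℓ)) + -log (exp (s i₂) / ∑ ℓ, exp (s ℓ)) := by
  rw [neg_log_exp_div_sum_exp, neg_log_exp_div_sum_exp]
  refine log_one_add_exp_abs_sub_le ?_
  classical
  rw [← sum_pair (f := fun ℓ => exp (s ℓ)) hi]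
  exact sum_le_sum_of_subset_of_nonneg (subset_univ _) fun ℓ _ _ => (exp_pos _).le

end LogSumExp

lemma log_one_add_exp_abs_sub_le_infoNCELoss {ι κ : Type*} [Fintype ι] [Fintype κ]
    {A : κ → ι → Bool} {j : κ} {i₁ i₂ : ι} (hi : i₁ ≠ i₂)
    (hA₁ : A j i₁ = true) (hA₂ : A j i₂ = true) (s : κ → ι → ℝ) :
    log (1 + exp |s j i₁ - s j i₂|) ≤ infoNCELoss A s := by
  classical
  set term : κ → ι → ℝ := fun j i =>
    -if A j i then log (exp (s j i) / ∑ ℓ, exp (s j ℓ)) else 0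
  have term_nonneg : ∀ j i, 0 ≤ term j i := by
    intro j i
    simp only [term]
    split
    · rw [neg_log_exp_div_sum_exp, sub_nonneg]
      exact le_log_sum_exp (s j) i
    · simp
  have loss_eq : infoNCELoss A s = ∑ j, ∑ i, term j i := by
    simp only [infoNCELoss, term, sum_neg_distrib]
  calc log (1 + exp |s j i₁ - s j i₂|)
      ≤ term j i₁ + term j i₂ := by
        simpa [term, hA₁, hA₂] using log_one_add_exp_abs_sub_le_neg_log_softmax hi (s j)
    _ = ∑ i ∈ {i₁, i₂}, term j i := (sum_pair hi).symm
    _ ≤ ∑ i, term j i :=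
        sum_le_sum_of_subset_of_nonneg (subset_univ _) fun i _ _ => term_nonneg j i
    _ ≤ ∑ j, ∑ i, term j i :=
        single_le_sum (f := fun j => ∑ i, term j i)
          (fun j _ => sum_nonneg fun i _ => term_nonneg j i) (mem_univ j)
    _ = infoNCELoss A s := loss_eq.symm

theorem stmt19_general {N n d : ℕ} (A : Fin N → Fin n → Bool)
    (U : Fin N → EuclideanSpace ℝ (Fin d)) (V : Fin n → EuclideanSpace ℝ (Fin d))
    (j : Fin N) (i₁ i₂ : Fin n) (hi : i₁ ≠ i₂)
    (hA₁ : A j i₁ = true) (hA₂ : A j i₂ = true)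
    (hdiff : ⟪U j, V i₁⟫ ≠ ⟪U j, V i₂⟫) :
    (∀ T : ℝ, 0 < T →
      Real.log (1 + Real.exp (T * |⟪U j, V i₁⟫ - ⟪U j, V i₂⟫|)) ≤
        -∑ j' : Fin N, ∑ i' : Fin n,
          if A j' i' then
            Real.log (Real.exp (T * ⟪U j', V i'⟫) / ∑ ℓ, Real.exp (T * ⟪U j', V ℓ⟫))
          else 0) ∧
    Filter.Tendsto
      (fun T : ℝ =>
        -∑ j' : Fin N, ∑ i' : Fin n,
          if A j' i' then
            Real.log (Real.exp (T * ⟪U j', V i'⟫) / ∑ ℓ, Real.exp (T * ⟪U j', V ℓ⟫))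
          else 0)
      Filter.atTop Filter.atTop := by
  have lower_bound : ∀ T : ℝ, 0 < T →
      log (1 + exp (T * |⟪U j, V i₁⟫ - ⟪U j, V i₂⟫|)) ≤
        infoNCELoss A fun j i => T * ⟪U j, V i⟫ := by
    intro T hT
    have := log_one_add_exp_abs_sub_le_infoNCELoss hi hA₁ hA₂ fun j i => T * ⟪U j, V i⟫
    rwa [← mul_sub, abs_mul, abs_of_pos hT] at this
  refine ⟨lower_bound, ?_⟩
  have hgap : 0 < |⟪U j, V i₁⟫ - ⟪U j, V i₂⟫| := abs_pos.mpr (sub_ne_zero.mpr hdiff)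
  refine Filter.tendsto_atTop_mono' _ ?_ (Filter.tendsto_id.atTop_mul_const hgap)
  filter_upwards [Filter.eventually_gt_atTop 0] with T hT
  calc T * |⟪U j, V i₁⟫ - ⟪U j, V i₂⟫|
      = log (exp (T * |⟪U j, V i₁⟫ - ⟪U j, V i₂⟫|)) := (log_exp _).symm
    _ ≤ log (1 + exp (T * |⟪U j, V i₁⟫ - ⟪U j, V i₂⟫|)) :=
        log_le_log (exp_pos _) (lt_one_add _).le
    _ ≤ _ := lower_bound T hT

theorem stmt19 {N n d : ℕ} (A : Fin N → Fin n → Bool)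
    (U : Fin N → EuclideanSpace ℝ (Fin d)) (V : Fin n → EuclideanSpace ℝ (Fin d))
    (hU : ∀ j, ‖U j‖ = 1) (hV : ∀ i, ‖V i‖ = 1)
    (j : Fin N) (i₁ i₂ : Fin n) (hi : i₁ ≠ i₂)
    (hA₁ : A j i₁ = true) (hA₂ : A j i₂ = true)
    (hdiff : ⟪U j, V i₁⟫ ≠ ⟪U j, V i₂⟫) :
    (∀ T : ℝ, 0 < T →
      Real.log (1 + Real.exp (T * |⟪U j, V i₁⟫ - ⟪U j, V i₂⟫|)) ≤
        -∑ j' : Fin N, ∑ i' : Fin n,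
          if A j' i' then
            Real.log (Real.exp (T * ⟪U j', V i'⟫) / ∑ ℓ, Real.exp (T * ⟪U j', V ℓ⟫))
          else 0) ∧
    Filter.Tendsto
      (fun T : ℝ =>
        -∑ j' : Fin N, ∑ i' : Fin n,
          if A j' i' then
            Real.log (Real.exp (T * ⟪U j', V i'⟫) / ∑ ℓ, Real.exp (T * ⟪U j', V ℓ⟫))
          else 0)
      Filter.atTop Filter.atTop :=
  stmt19_general A U V j i₁ i₂ hi hA₁ hA₂ hdiff
end
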